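/- arXiv:2502.11162 — 5 statements merged into one kernel-verified Lean document; each statement's English description precedes it below -/
import Mathlib

section
/- Let N, d, C be natural numbers at least 2, let p ∈ {1, ∞}, let k be a natural number with d + 4 ≤ k, and let σ, δ > 0 satisfy σ/δ < 1/(2·c_p^+(d)) where c_p^+(d) = d^{[1/2 − 1/p]_+} (with 1/∞ = 0). Then there is a universal constant C₀ such that for every δ-separated dataset D of size N with C classes in ℝ^d, there exists a feedforward ReLU neural network f : ℝ^d → ℝ of width k and depth at most C₀ · N · d that (σ, p)-robustly memorizes D. -/
open scoped ENNReal BigOperators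

noncomputable section

/-- A multilayer perceptron (feedforward ReLU network) with input dimension `m`
and output dimension `n`, given as a nonempty list of affine layers. -/
inductive MLP : ℕ → ℕ → Type
  | last : {m n : ℕ} → Matrix (Fin n) (Fin m) ℝ → (Fin n → ℝ) → MLP m n
  | cons : {m h n : ℕ} → Matrix (Fin h) (Fin m) ℝ → (Fin h → ℝ) → MLP h n → MLP m n

/-- Evaluation of an MLP: every affine layer except the last is followed by a
coordinatewise ReLU. -/
def MLP.eval : {m n : ℕ} → MLP m n → (Fin m → ℝ) → Fin n → ℝ
  | _, _, .last W b, x => W.mulVec x + b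
  | _, _, .cons W b rest, x => MLP.eval rest fun i => max ((W.mulVec x + b) i) 0

/-- Depth of an MLP: the number of affine layers. -/
def MLP.depth : {m n : ℕ} → MLP m n → ℕ
  | _, _, .last _ _ => 1
  | _, _, .cons _ _ rest => MLP.depth rest + 1

/-- Width of an MLP: the maximum of the hidden-layer dimensions. -/
def MLP.width : {m n : ℕ} → MLP m n → ℕ
  | _, _, .last _ _ => 0
  | _, _, @MLP.cons _ h _ _ _ rest => max h (MLP.width rest)

/-- The `l_p` (quasi-)norm on `ℝ^d`, for `p ∈ (0,∞]`. -/
def lpNorm (p : ℝ≥0∞) {d : ℕ} (x : Fin d → ℝ) : ℝ :=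
  if p = ⊤ then ⨆ i, |x i| else (∑ i, |x i| ^ p.toReal) ^ (1 / p.toReal)

/-- The `l_p` norm on `ℝ^d` with a real exponent `p`. -/
def lpNormR (p : ℝ) {d : ℕ} (x : Fin d → ℝ) : ℝ := (∑ i, |x i| ^ p) ^ (1 / p)

/-- `1/p`, with the convention `1/∞ = 0`. -/
def rinv (p : ℝ≥0∞) : ℝ := if p = ⊤ then 0 else 1 / p.toReal

/-- `c_p^+(d) = d^{[1/2 - 1/p]_+}`. -/
def cplus (p : ℝ≥0∞) (d : ℕ) : ℝ := (d : ℝ) ^ max ((1 : ℝ) / 2 - rinv p) 0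

/-- `c_p^-(d) = d^{[1/2 - 1/p]_-}`. -/
def cminus (p : ℝ≥0∞) (d : ℕ) : ℝ := (d : ℝ) ^ min ((1 : ℝ) / 2 - rinv p) 0

/-- A dataset is `(δ, q)`-separated if the minimal `l_q` distance between
differently labeled points equals `δ`. -/
def Separated {N d : ℕ} (q : ℝ≥0∞) (δ : ℝ) (X : Fin N → Fin d → ℝ) (Y : Fin N → ℕ) : Prop :=
  (∀ i j, Y i ≠ Y j → δ ≤ lpNorm q (X i - X j)) ∧
    ∃ i j, Y i ≠ Y j ∧ lpNorm q (X i - X j) = δ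

/-- `f` `(σ, p)`-robustly memorizes the dataset `(X, Y)`. -/
def RobustMem {N d : ℕ} (p : ℝ≥0∞) (σ : ℝ) (X : Fin N → Fin d → ℝ) (Y : Fin N → ℕ)
    (f : (Fin d → ℝ) → ℝ) : Prop :=
  ∀ i, ∀ x : Fin d → ℝ, lpNorm p (x - X i) ≤ σ → f x = (Y i : ℝ)

/-- A matrix `M` `(σ, k)`-preserves a dataset: Euclidean distances between points of
`σ`-neighborhoods (in `l₂`) of differently labeled data points do not decrease. -/
def Preserves {N d m : ℕ} (σ : ℝ) (X : Fin N → Fin d → ℝ) (Y : Fin N → ℕ)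
    (M : Matrix (Fin m) (Fin d) ℝ) : Prop :=
  ∀ i j, Y i ≠ Y j → ∀ a a' : Fin d → ℝ,
    lpNorm 2 (a - X i) ≤ σ → lpNorm 2 (a' - X j) ≤ σ →
      lpNorm 2 (a - a') ≤ lpNorm 2 (M.mulVec a - M.mulVec a')

/-- The `l₂ → l₂` (spectral) operator norm of a matrix. -/
def matOpNorm {m d : ℕ} (M : Matrix (Fin m) (Fin d) ℝ) : ℝ :=
  sSup {c | ∃ x : Fin d → ℝ, lpNorm 2 x ≤ 1 ∧ c = lpNorm 2 (M.mulVec x)}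

/-- Generalized binomial coefficient `C(s, m) = s(s-1)⋯(s-m+1)/m!`. -/
def gchoose (s : ℝ) (m : ℕ) : ℝ := (∏ i ∈ Finset.range m, (s - (i : ℝ))) / (m.factorial : ℝ)

namespace RM

abbrev Layer (k : ℕ) := Matrix (Fin k) (Fin k) ℝ × (Fin k → ℝ)

def applyLayer {k : ℕ} (l : Layer k) (s : Fin k → ℝ) : Fin k → ℝ :=
  fun i => max ((l.1.mulVec s + l.2) i) 0

def runLayers {k : ℕ} (ls : List (Layer k)) (s : Fin k → ℝ) : Fin k → ℝ :=
  ls.foldl (fun s l => applyLayer l s) s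

lemma runLayers_nil {k : ℕ} (s : Fin k → ℝ) : runLayers [] s = s := rfl

lemma runLayers_cons {k : ℕ} (l : Layer k) (ls : List (Layer k)) (s : Fin k → ℝ) :
    runLayers (l :: ls) s = runLayers ls (applyLayer l s) := rfl

lemma runLayers_append {k : ℕ} (l1 l2 : List (Layer k)) (s : Fin k → ℝ) :
    runLayers (l1 ++ l2) s = runLayers l2 (runLayers l1 s) := List.foldl_append ..

def chain {k : ℕ} : List (Layer k) → Matrix (Fin 1) (Fin k) ℝ → (Fin 1 → ℝ) → MLP k 1
  | [], Wf, bf => .last Wf bf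
  | l :: ls, Wf, bf => .cons l.1 l.2 (chain ls Wf bf)

lemma chain_eval {k : ℕ} (ls : List (Layer k)) (Wf : Matrix (Fin 1) (Fin k) ℝ)
    (bf : Fin 1 → ℝ) (s : Fin k → ℝ) :
    (chain ls Wf bf).eval s = fun o => (Wf.mulVec (runLayers ls s) + bf) o := by
  induction ls generalizing s with
  | nil => rfl
  | cons l ls ih =>
      show (chain ls Wf bf).eval (fun i => max ((l.1.mulVec s + l.2) i) 0) = _
      rw [ih]
      rfl

lemma chain_depth {k : ℕ} (ls : List (Layer k)) (Wf : Matrix (Fin 1) (Fin k) ℝ)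
    (bf : Fin 1 → ℝ) : (chain ls Wf bf).depth = ls.length + 1 := by
  induction ls with
  | nil => rfl
  | cons l ls ih => show (chain ls Wf bf).depth + 1 = _; rw [ih]; simp

lemma chain_width_le {k : ℕ} (ls : List (Layer k)) (Wf : Matrix (Fin 1) (Fin k) ℝ)
    (bf : Fin 1 → ℝ) : (chain ls Wf bf).width ≤ k := by
  induction ls with
  | nil => exact Nat.zero_le k
  | cons l ls ih => show max k (chain ls Wf bf).width ≤ k; omega

/-- The state representation used throughout the construction. -/
def stateFn (d k : ℕ) (R : ℝ) (x : Fin d → ℝ) (v A B E2 : ℝ) : Fin k → ℝ :=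
  fun i => if h : (i : ℕ) < d then x ⟨i, h⟩ + R
    else if (i : ℕ) = d then v else if (i : ℕ) = d + 1 then A
    else if (i : ℕ) = d + 2 then B else if (i : ℕ) = d + 3 then E2 else 0

/-- A generic row touching (at most) the `m`-th input slot and the 4 scalar slots. -/
def aRow (d k : ℕ) (m : ℕ) (cX cV cA cB cE : ℝ) : Fin k → ℝ :=
  fun j => (if (j : ℕ) = m then cX else 0) + (if (j : ℕ) = d then cV else 0)
    + (if (j : ℕ) = d + 1 then cA else 0) + (if (j : ℕ) = d + 2 then cB else 0)
    + (if (j : ℕ) = d + 3 then cE else 0)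

lemma dot_single {k : ℕ} (t : ℕ) (ht : t < k) (c : ℝ) (s : Fin k → ℝ) :
    ∑ j : Fin k, (if (j : ℕ) = t then c else 0) * s j = c * s ⟨t, ht⟩ := by
  rw [Finset.sum_eq_single (⟨t, ht⟩ : Fin k)] <;> simp +contextual [Fin.ext_iff]

lemma dot_aRow {d k : ℕ} (hk : d + 4 ≤ k) {m : ℕ} (hm : m < d)
    (cX cV cA cB cE : ℝ) (s : Fin k → ℝ) :
    ∑ j, aRow d k m cX cV cA cB cE j * s j
      = cX * s ⟨m, by omega⟩ + cV * s ⟨d, by omega⟩ + cA * s ⟨d + 1, by omega⟩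
        + cB * s ⟨d + 2, by omega⟩ + cE * s ⟨d + 3, by omega⟩ := by
  simp only [aRow, add_mul, Finset.sum_add_distrib]
  rw [dot_single m (by omega) cX s, dot_single d (by omega) cV s,
    dot_single (d+1) (by omega) cA s, dot_single (d+2) (by omega) cB s,
    dot_single (d+3) (by omega) cE s]

section stateFn_lemmas
variable {d k : ℕ} (hk : d + 4 ≤ k) (R : ℝ) (x : Fin d → ℝ) (v A B E2 : ℝ)

lemma stateFn_x {m : ℕ} (hm : m < d) :
    stateFn d k R x v A B E2 ⟨m, by omega⟩ = x ⟨m, hm⟩ + R := by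
  simp [stateFn, hm]

lemma stateFn_v : stateFn d k R x v A B E2 ⟨d, by omega⟩ = v := by
  simp [stateFn]

lemma stateFn_A : stateFn d k R x v A B E2 ⟨d + 1, by omega⟩ = A := by
  simp only [stateFn, Fin.val_mk]
  rw [dif_neg (by omega), if_neg (by omega)]; simp

lemma stateFn_B : stateFn d k R x v A B E2 ⟨d + 2, by omega⟩ = B := by
  simp only [stateFn, Fin.val_mk]
  rw [dif_neg (by omega), if_neg (by omega), if_neg (by omega)]; simp

lemma stateFn_E : stateFn d k R x v A B E2 ⟨d + 3, by omega⟩ = E2 := by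
  simp only [stateFn, Fin.val_mk]
  rw [dif_neg (by omega), if_neg (by omega), if_neg (by omega), if_neg (by omega)]; simp

end stateFn_lemmas

lemma stateFn_congr {d k : ℕ} {R : ℝ} {x : Fin d → ℝ} {a b c e a' b' c' e' : ℝ}
    (h1 : a = a') (h2 : b = b') (h3 : c = c') (h4 : e = e') :
    stateFn d k R x a b c e = stateFn d k R x a' b' c' e' := by
  rw [h1, h2, h3, h4]

lemma max_eq_of {a b : ℝ} (h : a = b) (hb : 0 ≤ b) : max a 0 = b := by
  rw [h]; exact max_eq_left hb

lemma max_congr0 {a b : ℝ} (h : a = b) : max a 0 = max b 0 := by rw [h]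

end RM
namespace RM

def mkLayer (d k : ℕ) (rV rA rB rE : Fin k → ℝ) (bV bA bB bE : ℝ) : Layer k :=
  (Matrix.of fun i j => if (i : ℕ) < d then (if (j : ℕ) = (i : ℕ) then 1 else 0)
      else if (i : ℕ) = d then rV j else if (i : ℕ) = d + 1 then rA j
      else if (i : ℕ) = d + 2 then rB j else if (i : ℕ) = d + 3 then rE j else 0,
   fun i => if (i : ℕ) < d then 0 else if (i : ℕ) = d then bV else if (i : ℕ) = d + 1 then bA
      else if (i : ℕ) = d + 2 then bB else if (i : ℕ) = d + 3 then bE else 0)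

def genLayer (d k : ℕ) (m : ℕ)
    (cVX cVV cVA cVB cVE bV cAX cAV cAA cAB cAE bA
     cBX cBV cBA cBB cBE bB cEX cEV cEA cEB cEE bE : ℝ) : Layer k :=
  mkLayer d k (aRow d k m cVX cVV cVA cVB cVE) (aRow d k m cAX cAV cAA cAB cAE)
    (aRow d k m cBX cBV cBA cBB cBE) (aRow d k m cEX cEV cEA cEB cEE) bV bA bB bE

lemma step_gen {d k : ℕ} (hk : d + 4 ≤ k) (R : ℝ) (x : Fin d → ℝ)
    (hx : ∀ m : Fin d, 0 ≤ x m + R) {m : ℕ} (hm : m < d)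
    (cVX cVV cVA cVB cVE bV cAX cAV cAA cAB cAE bA
     cBX cBV cBA cBB cBE bB cEX cEV cEA cEB cEE bE v A B E2 : ℝ) :
    applyLayer (genLayer d k m cVX cVV cVA cVB cVE bV cAX cAV cAA cAB cAE bA
        cBX cBV cBA cBB cBE bB cEX cEV cEA cEB cEE bE) (stateFn d k R x v A B E2)
      = stateFn d k R x
          (max (cVX * (x ⟨m, hm⟩ + R) + cVV * v + cVA * A + cVB * B + cVE * E2 + bV) 0)
          (max (cAX * (x ⟨m, hm⟩ + R) + cAV * v + cAA * A + cAB * B + cAE * E2 + bA) 0)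
          (max (cBX * (x ⟨m, hm⟩ + R) + cBV * v + cBA * A + cBB * B + cBE * E2 + bB) 0)
          (max (cEX * (x ⟨m, hm⟩ + R) + cEV * v + cEA * A + cEB * B + cEE * E2 + bE) 0) := by
  set s := stateFn d k R x v A B E2 with hs
  have hdot : ∀ cX cV cA cB cE : ℝ, ∑ j, aRow d k m cX cV cA cB cE j * s j
      = cX * (x ⟨m, hm⟩ + R) + cV * v + cA * A + cB * B + cE * E2 := by
    intro cX cV cA cB cE
    rw [dot_aRow hk hm, hs, stateFn_x hk R x v A B E2 hm, stateFn_v hk,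
      stateFn_A hk, stateFn_B hk, stateFn_E hk]
  funext i
  show max ((Matrix.mulVec _ s + _) i) 0 = _
  rw [Pi.add_apply, Matrix.mulVec, dotProduct]
  simp only [mkLayer, genLayer, Matrix.of_apply]
  rcases lt_or_ge (i : ℕ) d with h | h
  · simp only [if_pos h]
    rw [dot_single (i : ℕ) (by omega) 1 s]
    have hi : (⟨(i : ℕ), by omega⟩ : Fin k) = i := rfl
    rw [hi, one_mul, add_zero, hs]
    conv_rhs => rw [stateFn]
    simp only [dif_pos h]
    rw [stateFn]
    simp only [dif_pos h]
    exact max_eq_left (hx ⟨i, h⟩)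
  · have h5 : ¬ ((i : ℕ) < d) := by omega
    rcases Nat.lt_or_ge (i : ℕ) (d + 4) with h4 | h4
    · have : (i : ℕ) = d ∨ (i : ℕ) = d + 1 ∨ (i : ℕ) = d + 2 ∨ (i : ℕ) = d + 3 := by omega
      rcases this with hi | hi | hi | hi
      · simp only [if_neg h5, if_pos hi]
        rw [hdot]
        have hieq : i = (⟨d, by omega⟩ : Fin k) := Fin.ext hi
        rw [hieq, stateFn_v hk]
      · simp only [if_neg h5, if_neg (by omega : ¬ ((i:ℕ) = d)), if_pos hi]
        rw [hdot]
        have hieq : i = (⟨d + 1, by omega⟩ : Fin k) := Fin.ext hi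
        rw [hieq, stateFn_A hk]
      · simp only [if_neg h5, if_neg (by omega : ¬ ((i:ℕ) = d)),
          if_neg (by omega : ¬ ((i:ℕ) = d + 1)), if_pos hi]
        rw [hdot]
        have hieq : i = (⟨d + 2, by omega⟩ : Fin k) := Fin.ext hi
        rw [hieq, stateFn_B hk]
      · simp only [if_neg h5, if_neg (by omega : ¬ ((i:ℕ) = d)),
          if_neg (by omega : ¬ ((i:ℕ) = d + 1)), if_neg (by omega : ¬ ((i:ℕ) = d + 2)), if_pos hi]
        rw [hdot]
        have hieq : i = (⟨d + 3, by omega⟩ : Fin k) := Fin.ext hi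
        rw [hieq, stateFn_E hk]
    · simp only [if_neg h5, if_neg (by omega : ¬ ((i:ℕ) = d)),
        if_neg (by omega : ¬ ((i:ℕ) = d + 1)), if_neg (by omega : ¬ ((i:ℕ) = d + 2)),
        if_neg (by omega : ¬ ((i:ℕ) = d + 3)), zero_mul, Finset.sum_const_zero, add_zero]
      rw [stateFn]
      simp only [dif_neg h5]
      rw [if_neg (by omega : ¬ ((i:ℕ) = d)), if_neg (by omega : ¬ ((i:ℕ) = d + 1)),
        if_neg (by omega : ¬ ((i:ℕ) = d + 2)), if_neg (by omega : ¬ ((i:ℕ) = d + 3))]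
      simp

end RM
namespace RM

def layerStart (d k : ℕ) (Ainit : ℝ) : Layer k :=
  genLayer d k 0  0 1 (-1) 1 (-1) 0  0 0 0 0 0 Ainit  0 0 0 0 0 0  0 0 0 0 0 0

def layerSum (d k : ℕ) (R : ℝ) (m : ℕ) (cm : ℝ) : Layer k :=
  genLayer d k m  0 1 0 0 0 0  0 0 1 1 1 0  1 0 0 0 0 (-(R + cm))  (-1) 0 0 0 0 (R + cm)

def layerAlpha (d k : ℕ) (R : ℝ) (m : ℕ) (cm : ℝ) : Layer k :=
  genLayer d k m  0 1 0 0 0 0  0 0 1 (-1) 0 0  1 0 0 0 0 (-(R + cm))  (-1) 0 0 0 0 (R + cm)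

def layerBeta (d k : ℕ) (K0 K1 Creal : ℝ) : Layer k :=
  genLayer d k 0  0 1 0 0 0 0  0 0 1 0 0 0  0 0 0 (-K1) (-K1) K0  0 0 0 (-K1) (-K1) (K0 - Creal)

def layerGamma (d k : ℕ) : Layer k :=
  genLayer d k 0  0 1 0 0 0 0  0 0 1 0 0 0  0 0 1 (-1) 1 0  0 0 0 0 0 0

def layerP (d k : ℕ) (K0 K1 Creal : ℝ) : Layer k :=
  genLayer d k 0  0 1 0 0 0 0  0 0 (-K1) (-K1) (-K1) K0  0 0 (-K1) (-K1) (-K1) (K0 - Creal)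
    0 0 0 0 0 0

def layerQ (d k : ℕ) (y : ℝ) : Layer k :=
  genLayer d k 0  0 1 0 0 0 0  0 0 1 (-1) 0 0  0 (-1) 1 (-1) 0 y  0 (-1) (-1) 1 0 y

section runlayers
variable {d k : ℕ} (hk : d + 4 ≤ k) (hd : 0 < d) (R : ℝ) (x : Fin d → ℝ)
  (hx : ∀ m : Fin d, 0 ≤ x m + R) (v A B E2 : ℝ)
include hk hd hx

lemma run_layerStart (Ainit : ℝ) (hw : 0 ≤ v - A + B - E2) (hA : 0 ≤ Ainit) :
    applyLayer (layerStart d k Ainit) (stateFn d k R x v A B E2)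
      = stateFn d k R x (v - A + B - E2) Ainit 0 0 := by
  rw [layerStart, step_gen hk R x hx hd]
  exact stateFn_congr (max_eq_of (by ring) hw) (max_eq_of (by ring) hA)
    (max_eq_of (by ring) le_rfl) (max_eq_of (by ring) le_rfl)

lemma run_layerSum {m : ℕ} (hm : m < d) (cm : ℝ) (hv : 0 ≤ v) (hABE : 0 ≤ A + B + E2) :
    applyLayer (layerSum d k R m cm) (stateFn d k R x v A B E2)
      = stateFn d k R x v (A + B + E2) (max (x ⟨m, hm⟩ - cm) 0) (max (cm - x ⟨m, hm⟩) 0) := by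
  rw [layerSum, step_gen hk R x hx hm]
  exact stateFn_congr (max_eq_of (by ring) hv) (max_eq_of (by ring) hABE)
    (max_congr0 (by ring)) (max_congr0 (by ring))

lemma run_layerAlpha {m : ℕ} (hm : m < d) (cm : ℝ) (hv : 0 ≤ v) :
    applyLayer (layerAlpha d k R m cm) (stateFn d k R x v A B E2)
      = stateFn d k R x v (max (A - B) 0) (max (x ⟨m, hm⟩ - cm) 0) (max (cm - x ⟨m, hm⟩) 0) := by
  rw [layerAlpha, step_gen hk R x hx hm]
  exact stateFn_congr (max_eq_of (by ring) hv) (max_congr0 (by ring))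
    (max_congr0 (by ring)) (max_congr0 (by ring))

lemma run_layerBeta (K0 K1 Creal : ℝ) (hv : 0 ≤ v) (hA : 0 ≤ A) :
    applyLayer (layerBeta d k K0 K1 Creal) (stateFn d k R x v A B E2)
      = stateFn d k R x v A (max (K0 - K1 * (B + E2)) 0)
          (max (K0 - K1 * (B + E2) - Creal) 0) := by
  rw [layerBeta, step_gen hk R x hx hd]
  exact stateFn_congr (max_eq_of (by ring) hv) (max_eq_of (by ring) hA)
    (max_congr0 (by ring)) (max_congr0 (by ring))

lemma run_layerGamma (hv : 0 ≤ v) (hA : 0 ≤ A) :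
    applyLayer (layerGamma d k) (stateFn d k R x v A B E2)
      = stateFn d k R x v A (max (A - B + E2) 0) 0 := by
  rw [layerGamma, step_gen hk R x hx hd]
  exact stateFn_congr (max_eq_of (by ring) hv) (max_eq_of (by ring) hA)
    (max_congr0 (by ring)) (max_eq_of (by ring) le_rfl)

lemma run_layerP (K0 K1 Creal : ℝ) (hv : 0 ≤ v) :
    applyLayer (layerP d k K0 K1 Creal) (stateFn d k R x v A B E2)
      = stateFn d k R x v (max (K0 - K1 * (A + B + E2)) 0)
          (max (K0 - K1 * (A + B + E2) - Creal) 0) 0 := by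
  rw [layerP, step_gen hk R x hx hd]
  exact stateFn_congr (max_eq_of (by ring) hv) (max_congr0 (by ring))
    (max_congr0 (by ring)) (max_eq_of (by ring) le_rfl)

lemma run_layerQ (y : ℝ) (hv : 0 ≤ v) :
    applyLayer (layerQ d k y) (stateFn d k R x v A B E2)
      = stateFn d k R x v (max (A - B) 0) (max (y - v + A - B) 0) (max (y - v - A + B) 0) := by
  rw [layerQ, step_gen hk R x hx hd]
  exact stateFn_congr (max_eq_of (by ring) hv) (max_congr0 (by ring))
    (max_congr0 (by ring)) (max_congr0 (by ring))

end runlayers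
end RM
namespace RM

def cval {d : ℕ} (c : Fin d → ℝ) (t : ℕ) : ℝ := if h : t < d then c ⟨t, h⟩ else 0

lemma cval_lt {d : ℕ} (c : Fin d → ℝ) {t : ℕ} (h : t < d) : cval c t = c ⟨t, h⟩ := dif_pos h

def acc1 (x c : ℕ → ℝ) : ℕ → ℝ × ℝ × ℝ
  | 0 => (0, 0, 0)
  | t + 1 => ((acc1 x c t).1 + (acc1 x c t).2.1 + (acc1 x c t).2.2,
      max (x t - c t) 0, max (c t - x t) 0)

lemma acc1_nonneg (x c : ℕ → ℝ) (t : ℕ) :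
    0 ≤ (acc1 x c t).1 ∧ 0 ≤ (acc1 x c t).2.1 ∧ 0 ≤ (acc1 x c t).2.2 := by
  induction t with
  | zero => exact ⟨le_rfl, le_rfl, le_rfl⟩
  | succ t ih =>
      refine ⟨?_, le_max_right _ _, le_max_right _ _⟩
      show 0 ≤ (acc1 x c t).1 + (acc1 x c t).2.1 + (acc1 x c t).2.2
      linarith [ih.1, ih.2.1, ih.2.2]

lemma relu_add_relu_neg (a : ℝ) : max a 0 + max (-a) 0 = |a| := by
  rcases le_total a 0 with h | h
  · rw [max_eq_right h, abs_of_nonpos h, max_eq_left (by linarith)]; ring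
  · rw [max_eq_left h, abs_of_nonneg h, max_eq_right (by linarith)]; ring

lemma relu_flip (a b : ℝ) : max (b - a) 0 = max (-(a - b)) 0 := by congr 1; ring

lemma acc1_total (x c : ℕ → ℝ) (t : ℕ) :
    (acc1 x c t).1 + (acc1 x c t).2.1 + (acc1 x c t).2.2
      = ∑ u ∈ Finset.range t, |x u - c u| := by
  induction t with
  | zero => simp [acc1]
  | succ t ih =>
      rw [Finset.sum_range_succ, ← ih]
      show (acc1 x c t).1 + (acc1 x c t).2.1 + (acc1 x c t).2.2
          + max (x t - c t) 0 + max (c t - x t) 0 = _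
      rw [relu_flip (x t) (c t),
        add_assoc ((acc1 x c t).1 + (acc1 x c t).2.1 + (acc1 x c t).2.2),
        relu_add_relu_neg]

def acc2 (x c : ℕ → ℝ) (K0 K1 Creal : ℝ) : ℕ → ℝ × ℝ × ℝ
  | 0 => (Creal, 0, 0)
  | t + 1 =>
      (max ((acc2 x c K0 K1 Creal t).1 - (acc2 x c K0 K1 Creal t).2.1) 0,
       max (max ((acc2 x c K0 K1 Creal t).1 - (acc2 x c K0 K1 Creal t).2.1) 0
          - max (K0 - K1 * (max (x t - c t) 0 + max (c t - x t) 0)) 0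
          + max (K0 - K1 * (max (x t - c t) 0 + max (c t - x t) 0) - Creal) 0) 0,
       0)

def clampv (Creal z : ℝ) : ℝ := max z 0 - max (z - Creal) 0

lemma clampv_nonneg {Creal : ℝ} (hC : 0 ≤ Creal) (z : ℝ) : 0 ≤ clampv Creal z :=
  sub_nonneg.2 (max_le_max (by linarith) le_rfl)

lemma clampv_le {Creal : ℝ} (hC : 0 ≤ Creal) (z : ℝ) : clampv Creal z ≤ Creal := by
  rcases le_total z Creal with h | h
  · have h1 : max z 0 ≤ Creal := max_le h hC
    have h2 : (0:ℝ) ≤ max (z - Creal) 0 := le_max_right _ _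
    unfold clampv; linarith
  · rw [clampv, max_eq_left (by linarith), max_eq_left (by linarith)]; linarith

lemma clampv_eq_top {Creal : ℝ} (hC : 0 ≤ Creal) {z : ℝ} (h : Creal ≤ z) :
    clampv Creal z = Creal := by
  rw [clampv, max_eq_left (by linarith), max_eq_left (by linarith)]; ring

lemma clampv_eq_bot {Creal : ℝ} {z : ℝ} (h : z ≤ 0) (hC : 0 ≤ Creal) :
    clampv Creal z = 0 := by
  rw [clampv, max_eq_right h, max_eq_right (by linarith)]; ring

def minv (x c : ℕ → ℝ) (K0 K1 Creal : ℝ) : ℕ → ℝ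
  | 0 => Creal
  | t + 1 => min (minv x c K0 K1 Creal t) (clampv Creal (K0 - K1 * |x t - c t|))

lemma sub_relu_sub (s u : ℝ) : s - max (s - u) 0 = min s u := by
  rcases le_total s u with h | h <;> simp [*] <;> linarith

lemma acc2_diff (x c : ℕ → ℝ) {K0 K1 Creal : ℝ} (hC : 0 ≤ Creal) (t : ℕ) :
    (acc2 x c K0 K1 Creal t).1 - (acc2 x c K0 K1 Creal t).2.1 = minv x c K0 K1 Creal t
      ∧ 0 ≤ minv x c K0 K1 Creal t := by
  induction t with
  | zero => exact ⟨by simp [acc2, minv], hC⟩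
  | succ t ih =>
      have habs : max (x t - c t) 0 + max (c t - x t) 0 = |x t - c t| := by
        rw [relu_flip (x t) (c t), relu_add_relu_neg]
      have hA : max ((acc2 x c K0 K1 Creal t).1 - (acc2 x c K0 K1 Creal t).2.1) 0
          = minv x c K0 K1 Creal t := by rw [ih.1]; exact max_eq_left ih.2
      refine ⟨?_, le_min ih.2 (clampv_nonneg hC _)⟩
      show max _ 0 - max _ 0 = _
      rw [hA, habs]
      rw [show minv x c K0 K1 Creal t - max (K0 - K1 * |x t - c t|) 0
            + max (K0 - K1 * |x t - c t| - Creal) 0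
          = minv x c K0 K1 Creal t - clampv Creal (K0 - K1 * |x t - c t|) by
        rw [clampv]; ring]
      rw [sub_relu_sub]
      rfl

lemma minv_le_C {x c : ℕ → ℝ} {K0 K1 Creal : ℝ} (t : ℕ) :
    minv x c K0 K1 Creal t ≤ Creal := by
  induction t with
  | zero => exact le_rfl
  | succ t ih => exact (min_le_left _ _).trans ih

lemma minv_le {x c : ℕ → ℝ} {K0 K1 Creal : ℝ} {u t : ℕ} (h : u < t) :
    minv x c K0 K1 Creal t ≤ clampv Creal (K0 - K1 * |x u - c u|) := by
  induction t with
  | zero => omega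
  | succ t ih =>
      rcases Nat.lt_or_ge u t with h' | h'
      · exact (min_le_left _ _).trans (ih h')
      · have : u = t := by omega
        subst this; exact min_le_right _ _

lemma minv_eq_C {x c : ℕ → ℝ} {K0 K1 Creal : ℝ} (hC : 0 ≤ Creal) {t : ℕ}
    (h : ∀ u, u < t → Creal ≤ K0 - K1 * |x u - c u|) :
    minv x c K0 K1 Creal t = Creal := by
  induction t with
  | zero => rfl
  | succ t ih =>
      show min _ _ = _
      rw [ih (fun u hu => h u (by omega)), clampv_eq_top hC (h t (by omega)), min_self]

end RM
namespace RM

def coordLayers (d k : ℕ) (R K0 K1 Creal : ℝ) (inf : Bool) (c : Fin d → ℝ) : ℕ → List (Layer k)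
  | 0 => []
  | t + 1 => coordLayers d k R K0 K1 Creal inf c t ++
      (if inf then [layerAlpha d k R t (cval c t), layerBeta d k K0 K1 Creal, layerGamma d k]
       else [layerSum d k R t (cval c t)])

def blockSum (d k : ℕ) (R K0 K1 Creal : ℝ) (c : Fin d → ℝ) (y : ℝ) : List (Layer k) :=
  layerStart d k 0 ::
    (coordLayers d k R K0 K1 Creal false c d ++ [layerP d k K0 K1 Creal, layerQ d k y])

def blockInf (d k : ℕ) (R K0 K1 Creal : ℝ) (c : Fin d → ℝ) (y : ℝ) : List (Layer k) :=
  layerStart d k Creal :: (coordLayers d k R K0 K1 Creal true c d ++ [layerQ d k y])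

lemma coordLayers_length (d k : ℕ) (R K0 K1 Creal : ℝ) (inf : Bool) (c : Fin d → ℝ) (t : ℕ) :
    (coordLayers d k R K0 K1 Creal inf c t : List (Layer k)).length
      = t * (if inf then 3 else 1) := by
  induction t with
  | zero => simp [coordLayers]
  | succ t ih =>
      rw [coordLayers, List.length_append, ih]
      cases inf <;> simp <;> ring

section runcoord
variable {d k : ℕ} (hk : d + 4 ≤ k) (hd : 0 < d) (R K0 K1 Creal : ℝ) (x : Fin d → ℝ)
  (hx : ∀ m : Fin d, 0 ≤ x m + R) (c : Fin d → ℝ) (w : ℝ)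
include hk hd hx

lemma run_coord_sum (hw : 0 ≤ w) (t : ℕ) (ht : t ≤ d) :
    runLayers (coordLayers d k R K0 K1 Creal false c t) (stateFn d k R x w 0 0 0)
      = stateFn d k R x w (acc1 (cval x) (cval c) t).1 (acc1 (cval x) (cval c) t).2.1
          (acc1 (cval x) (cval c) t).2.2 := by
  induction t with
  | zero => rw [coordLayers, runLayers_nil]; rfl
  | succ t ih =>
      have hm : t < d := by omega
      rw [coordLayers, runLayers_append, ih (by omega)]
      show applyLayer (layerSum d k R t (cval c t)) _ = _
      rw [run_layerSum hk hd R x hx _ _ _ _ hm (cval c t) hw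
        (by have := acc1_nonneg (cval x) (cval c) t; linarith [this.1, this.2.1, this.2.2])]
      rw [← cval_lt x hm]
      exact stateFn_congr rfl (by simp [acc1]) (by simp [acc1]) (by simp [acc1])

lemma run_coord_inf (hw : 0 ≤ w) (hC : 0 ≤ Creal) (t : ℕ) (ht : t ≤ d) :
    runLayers (coordLayers d k R K0 K1 Creal true c t) (stateFn d k R x w Creal 0 0)
      = stateFn d k R x w (acc2 (cval x) (cval c) K0 K1 Creal t).1
          (acc2 (cval x) (cval c) K0 K1 Creal t).2.1
          (acc2 (cval x) (cval c) K0 K1 Creal t).2.2 := by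
  induction t with
  | zero => rw [coordLayers, runLayers_nil]; exact stateFn_congr rfl rfl rfl rfl
  | succ t ih =>
      have hm : t < d := by omega
      rw [coordLayers, runLayers_append, ih (by omega)]
      show runLayers [layerAlpha d k R t (cval c t), layerBeta d k K0 K1 Creal, layerGamma d k] _ = _
      rw [runLayers_cons, run_layerAlpha hk hd R x hx _ _ _ _ hm (cval c t) hw]
      rw [runLayers_cons, run_layerBeta hk hd R x hx _ _ _ _ K0 K1 Creal hw (le_max_right _ _)]
      rw [runLayers_cons, run_layerGamma hk hd R x hx _ _ _ _ hw (le_max_right _ _), runLayers_nil]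
      rw [← cval_lt x hm]
      exact stateFn_congr rfl (by simp [acc2]) (by simp [acc2]) (by simp [acc2])

end runcoord

section runblock
variable {d k : ℕ} (hk : d + 4 ≤ k) (hd : 0 < d) (R K0 K1 Creal : ℝ) (x : Fin d → ℝ)
  (hx : ∀ m : Fin d, 0 ≤ x m + R) (c : Fin d → ℝ) (y : ℝ) (v A B E2 : ℝ)
include hk hd hx

lemma run_blockSum (hC : 0 ≤ Creal) (hw : 0 ≤ v - A + B - E2) :
    runLayers (blockSum d k R K0 K1 Creal c y) (stateFn d k R x v A B E2)
      = stateFn d k R x (v - A + B - E2)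
          (clampv Creal (K0 - K1 * ∑ u ∈ Finset.range d, |cval x u - cval c u|))
          (max (y - (v - A + B - E2)
            + clampv Creal (K0 - K1 * ∑ u ∈ Finset.range d, |cval x u - cval c u|)) 0)
          (max (y - (v - A + B - E2)
            - clampv Creal (K0 - K1 * ∑ u ∈ Finset.range d, |cval x u - cval c u|)) 0) := by
  set w := v - A + B - E2 with hwdef
  set D := ∑ u ∈ Finset.range d, |cval x u - cval c u| with hD
  rw [blockSum, runLayers_cons,
    run_layerStart hk hd R x hx v A B E2 0 hw le_rfl,
    runLayers_append, run_coord_sum hk hd R K0 K1 Creal x hx c w hw d le_rfl,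
    runLayers_cons, run_layerP hk hd R x hx _ _ _ _ K0 K1 Creal hw,
    show (acc1 (cval x) (cval c) d).1 + (acc1 (cval x) (cval c) d).2.1
        + (acc1 (cval x) (cval c) d).2.2 = D from acc1_total _ _ d,
    runLayers_cons, run_layerQ hk hd R x hx _ _ _ _ y hw, runLayers_nil]
  have key : max (K0 - K1 * D) 0 - max (K0 - K1 * D - Creal) 0 = clampv Creal (K0 - K1 * D) := rfl
  refine stateFn_congr rfl ?_ ?_ ?_
  · rw [key]; exact max_eq_left (clampv_nonneg hC _)
  · congr 1; rw [← key]; ring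
  · congr 1; rw [← key]; ring

lemma run_blockInf (hC : 0 ≤ Creal) (hw : 0 ≤ v - A + B - E2) :
    runLayers (blockInf d k R K0 K1 Creal c y) (stateFn d k R x v A B E2)
      = stateFn d k R x (v - A + B - E2)
          (minv (cval x) (cval c) K0 K1 Creal d)
          (max (y - (v - A + B - E2) + minv (cval x) (cval c) K0 K1 Creal d) 0)
          (max (y - (v - A + B - E2) - minv (cval x) (cval c) K0 K1 Creal d) 0) := by
  set w := v - A + B - E2 with hwdef
  rw [blockInf, runLayers_cons,
    run_layerStart hk hd R x hx v A B E2 Creal hw hC,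
    runLayers_append, run_coord_inf hk hd R K0 K1 Creal x hx c w hw hC d le_rfl,
    runLayers_cons, run_layerQ hk hd R x hx _ _ _ _ y hw, runLayers_nil]
  have key : (acc2 (cval x) (cval c) K0 K1 Creal d).1
      - (acc2 (cval x) (cval c) K0 K1 Creal d).2.1 = minv (cval x) (cval c) K0 K1 Creal d :=
    (acc2_diff _ _ hC d).1
  have hge : 0 ≤ minv (cval x) (cval c) K0 K1 Creal d := (acc2_diff (cval x) (cval c) hC d).2
  refine stateFn_congr rfl ?_ ?_ ?_
  · rw [show (acc2 (cval x) (cval c) K0 K1 Creal d).1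
        - (acc2 (cval x) (cval c) K0 K1 Creal d).2.1 = minv (cval x) (cval c) K0 K1 Creal d
      from key]
    exact max_eq_left hge
  · congr 1; rw [show y - w + (acc2 (cval x) (cval c) K0 K1 Creal d).1
        - (acc2 (cval x) (cval c) K0 K1 Creal d).2.1
      = y - w + ((acc2 (cval x) (cval c) K0 K1 Creal d).1
        - (acc2 (cval x) (cval c) K0 K1 Creal d).2.1) by ring, key]
  · congr 1; rw [show y - w - (acc2 (cval x) (cval c) K0 K1 Creal d).1
        + (acc2 (cval x) (cval c) K0 K1 Creal d).2.1
      = y - w - ((acc2 (cval x) (cval c) K0 K1 Creal d).1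
        - (acc2 (cval x) (cval c) K0 K1 Creal d).2.1) by ring, key]

end runblock
end RM
namespace RM

section updfacts
variable {w y a : ℝ}

/-- the value of `w` after one memory-update step -/
private def upd (w y a : ℝ) : ℝ := w - a + max (y - w + a) 0 - max (y - w - a) 0

lemma upd_le (ha : 0 ≤ a) (h : w ≤ y) : w ≤ upd w y a ∧ upd w y a ≤ y := by
  unfold upd
  rcases max_cases (y - w + a) (0:ℝ) with ⟨h1, h2⟩ | ⟨h1, h2⟩ <;>
    rcases max_cases (y - w - a) (0:ℝ) with ⟨h3, h4⟩ | ⟨h3, h4⟩ <;>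
      rw [h1, h3] <;> constructor <;> linarith

lemma upd_ge (ha : 0 ≤ a) (h : y ≤ w) : y ≤ upd w y a ∧ upd w y a ≤ w := by
  unfold upd
  rcases max_cases (y - w + a) (0:ℝ) with ⟨h1, h2⟩ | ⟨h1, h2⟩ <;>
    rcases max_cases (y - w - a) (0:ℝ) with ⟨h3, h4⟩ | ⟨h3, h4⟩ <;>
      rw [h1, h3] <;> constructor <;> linarith

lemma upd_zero (h : a = 0) : upd w y a = w := by
  subst h; unfold upd; rcases max_cases (y - w + 0) (0:ℝ) with ⟨h1, h2⟩ | ⟨h1, h2⟩ <;>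
    rcases max_cases (y - w - 0) (0:ℝ) with ⟨h3, h4⟩ | ⟨h3, h4⟩ <;> rw [h1, h3] <;> linarith

lemma upd_set (h : |y - w| ≤ a) : upd w y a = y := by
  rcases abs_le.1 h with ⟨hl, hr⟩
  unfold upd
  rw [max_eq_left (by linarith), max_eq_right (by linarith)]
  ring

end updfacts

/-- The main induction over the blocks of the network. -/
lemma run_flatMap {d k : ℕ} (R : ℝ) (x : Fin d → ℝ) {Creal Yj : ℝ} (hC1 : 1 ≤ Creal)
    {N : ℕ} (blockOf : Fin N → List (Layer k)) (yv : Fin N → ℝ)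
    (hy : ∀ i, 1 ≤ yv i ∧ yv i ≤ Creal) (j : Fin N) (hyj : yv j = Yj)
    (hblock : ∀ (i : Fin N) (v A B E2 : ℝ), 0 ≤ v - A + B - E2 → v - A + B - E2 ≤ Creal →
      ∃ aF : ℝ, runLayers (blockOf i) (stateFn d k R x v A B E2)
          = stateFn d k R x (v - A + B - E2) aF
              (max (yv i - (v - A + B - E2) + aF) 0) (max (yv i - (v - A + B - E2) - aF) 0)
        ∧ 0 ≤ aF ∧ aF ≤ Creal ∧ (i = j → aF = Creal) ∧ (yv i ≠ Yj → aF = 0)) :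
    ∀ (l : List (Fin N)) (v A B E2 : ℝ), 0 ≤ v - A + B - E2 → v - A + B - E2 ≤ Creal →
      ∃ v' A' B' E' : ℝ,
        runLayers (l.flatMap blockOf) (stateFn d k R x v A B E2) = stateFn d k R x v' A' B' E'
        ∧ 0 ≤ v' - A' + B' - E' ∧ v' - A' + B' - E' ≤ Creal
        ∧ (v - A + B - E2 = Yj → v' - A' + B' - E' = Yj)
        ∧ (j ∈ l → v' - A' + B' - E' = Yj) := by
  intro l
  induction l with
  | nil =>
      intro v A B E2 h0 h1
      exact ⟨v, A, B, E2, by simp [runLayers_nil], h0, h1, fun h => h, by simp⟩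
  | cons i l ih =>
      intro v A B E2 h0 h1
      set w := v - A + B - E2 with hw
      obtain ⟨aF, hrun, haF0, haFC, haFj, haFne⟩ := hblock i v A B E2 h0 h1
      rw [List.flatMap_cons, runLayers_append, hrun]
      set b1 := max (yv i - w + aF) 0
      set b2 := max (yv i - w - aF) 0
      have hw1 : w - aF + b1 - b2 = upd w (yv i) aF := rfl
      have hyi1 : 1 ≤ yv i := (hy i).1
      have hyiC : yv i ≤ Creal := (hy i).2
      have hbounds : 0 ≤ upd w (yv i) aF ∧ upd w (yv i) aF ≤ Creal := by
        rcases le_total w (yv i) with h | h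
        · obtain ⟨u1, u2⟩ := upd_le haF0 h; constructor <;> linarith
        · obtain ⟨u1, u2⟩ := upd_ge haF0 h; constructor <;> linarith
      obtain ⟨v', A', B', E', hrun', h0', h1', hkeep', hmem'⟩ :=
        ih w aF b1 b2 (by rw [hw1]; exact hbounds.1) (by rw [hw1]; exact hbounds.2)
      refine ⟨v', A', B', E', hrun', h0', h1', ?_, ?_⟩
      · intro hwY
        apply hkeep'
        rw [hw1]
        by_cases hlab : yv i = Yj
        · rcases le_total w (yv i) with h | h
          · obtain ⟨u1, u2⟩ := upd_le haF0 h; linarith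
          · obtain ⟨u1, u2⟩ := upd_ge haF0 h; linarith
        · rw [upd_zero (haFne hlab)]; exact hwY
      · intro hmem
        rcases List.mem_cons.1 hmem with hji | hji
        · apply hkeep'
          rw [hw1, upd_set (by rw [haFj hji.symm, abs_le]; constructor <;> linarith)]
          rw [hji] at hyj; exact hyj
        · exact hmem' hji

end RM
namespace RM

lemma lpNorm_one {d : ℕ} (u : Fin d → ℝ) : lpNorm 1 u = ∑ i, |u i| := by
  rw [lpNorm, if_neg (by simp)]
  simp [ENNReal.toReal_one]

lemma lpNorm_top {d : ℕ} (u : Fin d → ℝ) : lpNorm ⊤ u = ⨆ i, |u i| := by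
  rw [lpNorm, if_pos rfl]

lemma lpNorm_two {d : ℕ} (u : Fin d → ℝ) :
    lpNorm 2 u = (∑ i, |u i| ^ (2:ℝ)) ^ ((1:ℝ)/2) := by
  rw [lpNorm, if_neg (by simp)]
  norm_num

lemma lpNorm_two_le_sum_abs {d : ℕ} (u : Fin d → ℝ) : lpNorm 2 u ≤ ∑ i, |u i| := by
  set T := ∑ i, |u i| with hT
  have hT0 : 0 ≤ T := Finset.sum_nonneg fun i _ => abs_nonneg _
  have h1 : ∑ i, |u i| ^ (2:ℝ) ≤ T ^ (2:ℝ) := by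
    rw [show (2:ℝ) = ((2:ℕ):ℝ) by norm_num]
    rw [Real.rpow_natCast]
    calc ∑ i, |u i| ^ ((2:ℕ):ℝ) = ∑ i, |u i| ^ (2:ℕ) := by
          refine Finset.sum_congr rfl fun i _ => ?_; rw [Real.rpow_natCast]
      _ ≤ ∑ i, |u i| * T := by
          refine Finset.sum_le_sum fun i _ => ?_
          rw [pow_two]
          exact mul_le_mul_of_nonneg_left
            (Finset.single_le_sum (fun i _ => abs_nonneg (u i)) (Finset.mem_univ i))
            (abs_nonneg _)
      _ = T * T := by rw [← Finset.sum_mul]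
      _ = T ^ (2:ℕ) := by ring
  have h2 : lpNorm 2 u ≤ (T ^ (2:ℝ)) ^ ((1:ℝ)/2) := by
    rw [lpNorm_two]
    exact Real.rpow_le_rpow (Finset.sum_nonneg fun i _ =>
      Real.rpow_nonneg (abs_nonneg _) _) h1 (by norm_num)
  calc lpNorm 2 u ≤ (T ^ (2:ℝ)) ^ ((1:ℝ)/2) := h2
    _ = T := by
        rw [← Real.rpow_mul hT0]
        norm_num

lemma abs_le_sup {d : ℕ} (u : Fin d → ℝ) (t : Fin d) : |u t| ≤ ⨆ i, |u i| :=
  le_ciSup (f := fun i => |u i|) (Set.Finite.bddAbove (Set.finite_range _)) t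

lemma sup_nonneg {d : ℕ} [Nonempty (Fin d)] (u : Fin d → ℝ) : 0 ≤ ⨆ i, |u i| :=
  (abs_nonneg _).trans (abs_le_sup u (Classical.arbitrary _))

lemma sup_le_of {d : ℕ} [Nonempty (Fin d)] (u : Fin d → ℝ) {b : ℝ} (h : ∀ i, |u i| ≤ b) :
    (⨆ i, |u i|) ≤ b := ciSup_le h

lemma exists_sup_attained {d : ℕ} [Nonempty (Fin d)] (u : Fin d → ℝ) :
    ∃ t, (⨆ i, |u i|) ≤ |u t| := by
  obtain ⟨t, ht⟩ := Finite.exists_max fun i => |u i|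
  exact ⟨t, ciSup_le ht⟩

lemma lpNorm_two_le_sqrtd_sup {d : ℕ} [Nonempty (Fin d)] (u : Fin d → ℝ) :
    lpNorm 2 u ≤ (d:ℝ) ^ ((1:ℝ)/2) * ⨆ i, |u i| := by
  set S := ⨆ i, |u i| with hS
  have hS0 : 0 ≤ S := sup_nonneg u
  have h1 : ∑ i, |u i| ^ (2:ℝ) ≤ (d:ℝ) * S ^ (2:ℝ) := by
    calc ∑ i, |u i| ^ (2:ℝ) ≤ ∑ _i : Fin d, S ^ (2:ℝ) := by
          refine Finset.sum_le_sum fun i _ => ?_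
          exact Real.rpow_le_rpow (abs_nonneg _) (abs_le_sup u i) (by norm_num)
      _ = (d:ℝ) * S ^ (2:ℝ) := by
          rw [Finset.sum_const, Finset.card_univ, Fintype.card_fin, nsmul_eq_mul]
  have h2 : lpNorm 2 u ≤ ((d:ℝ) * S ^ (2:ℝ)) ^ ((1:ℝ)/2) := by
    rw [lpNorm_two]
    exact Real.rpow_le_rpow (Finset.sum_nonneg fun i _ =>
      Real.rpow_nonneg (abs_nonneg _) _) h1 (by norm_num)
  refine h2.trans ?_
  rw [Real.mul_rpow (Nat.cast_nonneg d) (Real.rpow_nonneg hS0 _), ← Real.rpow_mul hS0]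
  norm_num

lemma sum_abs_triangle {d : ℕ} (a b c : Fin d → ℝ) :
    ∑ i, |a i - b i| ≤ (∑ i, |a i - c i|) + ∑ i, |c i - b i| := by
  rw [← Finset.sum_add_distrib]
  exact Finset.sum_le_sum fun i _ => abs_sub_le _ _ _

lemma sup_abs_triangle {d : ℕ} [Nonempty (Fin d)] (a b c : Fin d → ℝ) :
    (⨆ i, |a i - b i|) ≤ (⨆ i, |a i - c i|) + ⨆ i, |c i - b i| := by
  refine ciSup_le fun i => (abs_sub_le (a i) (c i) (b i)).trans ?_
  exact add_le_add (abs_le_sup (fun t => a t - c t) i) (abs_le_sup (fun t => c t - b t) i)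

lemma cplus_one (d : ℕ) : cplus 1 d = 1 := by
  rw [cplus, rinv, if_neg (by simp)]
  norm_num

lemma cplus_top (d : ℕ) : cplus ⊤ d = (d:ℝ) ^ ((1:ℝ)/2) := by
  rw [cplus, rinv, if_pos rfl]
  norm_num

end RM
namespace RM

def firstLayerW (d k : ℕ) : Matrix (Fin k) (Fin d) ℝ :=
  Matrix.of fun i j => if (j:ℕ) = (i:ℕ) then 1 else 0

def firstLayerb (d k : ℕ) (R : ℝ) : Fin k → ℝ := fun i => if (i:ℕ) < d then R else 0

lemma first_layer_eval {d k : ℕ} (hk : d + 4 ≤ k) (R : ℝ) (x : Fin d → ℝ)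
    (hx : ∀ m : Fin d, 0 ≤ x m + R) :
    (fun i => max (((firstLayerW d k).mulVec x + firstLayerb d k R) i) 0)
      = stateFn d k R x 0 0 0 0 := by
  funext i
  rw [Pi.add_apply, Matrix.mulVec, dotProduct]
  simp only [firstLayerW, firstLayerb, Matrix.of_apply]
  rcases lt_or_ge (i:ℕ) d with h | h
  · rw [dot_single (i:ℕ) h 1 x, if_pos h, stateFn]
    simp only [dif_pos h]
    rw [one_mul]
    exact max_eq_left (hx ⟨i, h⟩)
  · have hz : ∀ j : Fin d, (if ((j:ℕ) = (i:ℕ)) then (1:ℝ) else 0) * x j = 0 := fun j => by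
      rw [if_neg (by omega)]; ring
    rw [Finset.sum_congr rfl (fun j _ => hz j), Finset.sum_const_zero, if_neg (by omega),
      stateFn]
    simp only [dif_neg (by omega : ¬ (i:ℕ) < d)]
    split_ifs <;> simp

def lastLayerW (d k : ℕ) : Matrix (Fin 1) (Fin k) ℝ :=
  Matrix.of fun _ j => aRow d k 0 0 1 (-1) 1 (-1) j

lemma last_layer_eval {d k : ℕ} (hk : d + 4 ≤ k) (hd : 0 < d) (R : ℝ) (x : Fin d → ℝ)
    (v A B E2 : ℝ) :
    ((lastLayerW d k).mulVec (stateFn d k R x v A B E2) + (0 : Fin 1 → ℝ)) 0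
      = v - A + B - E2 := by
  rw [Pi.add_apply, Pi.zero_apply, Matrix.mulVec, dotProduct]
  simp only [lastLayerW, Matrix.of_apply]
  rw [dot_aRow hk hd, stateFn_v hk, stateFn_A hk, stateFn_B hk, stateFn_E hk]
  ring

lemma flatMap_length_const {α : Type*} {k : ℕ} (blockOf : α → List (Layer k)) (c : ℕ)
    (h : ∀ a, (blockOf a).length = c) :
    ∀ l : List α, (l.flatMap blockOf).length = l.length * c := by
  intro l
  induction l with
  | nil => simp
  | cons a l ih => rw [List.flatMap_cons, List.length_append, ih, h a, List.length_cons]; ring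

lemma sum_cval {d : ℕ} (x c : Fin d → ℝ) :
    ∑ u ∈ Finset.range d, |cval x u - cval c u| = ∑ t : Fin d, |x t - c t| := by
  rw [← Fin.sum_univ_eq_sum_range (fun u => |cval x u - cval c u|) d]
  refine Finset.sum_congr rfl fun t _ => ?_
  rw [cval_lt x t.isLt, cval_lt c t.isLt]

end RM
set_option maxHeartbeats 1600000 in
/-- **Robust memorization with large width, `p ∈ {1, ∞}`** (width `k ≥ d + 4`, depth `O(Nd)`). -/
theorem robust_memorization_large_width_one_infty :
    ∃ C₀ : ℝ, 0 < C₀ ∧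
      ∀ (N d C k : ℕ) (p : ℝ≥0∞) (σ δ : ℝ),
        2 ≤ N → 2 ≤ d → 2 ≤ C → (p = 1 ∨ p = ⊤) → d + 4 ≤ k → 0 < σ → 0 < δ →
        σ / δ < 1 / (2 * cplus p d) →
        ∀ (X : Fin N → Fin d → ℝ) (Y : Fin N → ℕ),
          (∀ i, 1 ≤ Y i ∧ Y i ≤ C) → Separated 2 δ X Y →
          ∃ net : MLP d 1, net.width = k ∧
            (net.depth : ℝ) ≤ C₀ * N * d ∧
            RobustMem p σ X Y (fun x => net.eval x 0) := by
  refine ⟨5, by norm_num, ?_⟩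
  intro N d C k p σ δ hN hd2 hC2 hp hk hσ hδ hratio X Y hY hsep
  haveI : Nonempty (Fin d) := ⟨⟨0, by omega⟩⟩
  have hd0 : 0 < d := by omega
  set Creal := (C : ℝ) with hCreal
  have hC1 : (1:ℝ) ≤ Creal := by rw [hCreal]; exact_mod_cast (by omega : 1 ≤ C)
  have hC0 : (0:ℝ) ≤ Creal := by linarith
  have hcp : 0 < cplus p d := by
    rcases hp with h | h <;> rw [h]
    · rw [RM.cplus_one]; norm_num
    · rw [RM.cplus_top]; exact Real.rpow_pos_of_pos (by exact_mod_cast hd0) _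
  set τ := δ / (2 * cplus p d) with hτdef
  have hτpos : 0 < τ := div_pos hδ (by positivity)
  have hστ : σ < τ := by
    have h2 : 0 < 2 * cplus p d := by positivity
    rw [div_lt_div_iff₀ hδ h2] at hratio
    rw [hτdef, lt_div_iff₀ h2]
    linarith
  set K1 := Creal / (τ - σ) with hK1def
  have hK1nn : 0 ≤ K1 := div_nonneg hC0 (by linarith)
  set K0 := K1 * τ with hK0def
  have hKC : K0 - Creal = K1 * σ := by
    have hτσ : τ - σ ≠ 0 := by linarith
    rw [hK0def, hK1def]
    field_simp
    ring
  have hne : (Finset.univ : Finset (Fin N × Fin d)).Nonempty :=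
    ⟨⟨⟨0, by omega⟩, ⟨0, by omega⟩⟩, Finset.mem_univ _⟩
  set Rb := Finset.univ.sup' hne (fun q : Fin N × Fin d => |X q.1 q.2|) with hRbdef
  set R := σ + Rb + 1 with hRdef
  have hcoord : ∀ (j : Fin N) (x : Fin d → ℝ), lpNorm p (x - X j) ≤ σ →
      ∀ t : Fin d, |x t - X j t| ≤ σ := by
    intro j x hball t
    rcases hp with h | h <;> rw [h] at hball
    · rw [RM.lpNorm_one] at hball
      refine le_trans ?_ hball
      have h1 := Finset.single_le_sum (f := fun i => |(x - X j) i|)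
        (fun i _ => abs_nonneg _) (Finset.mem_univ t)
      simpa using h1
    · rw [RM.lpNorm_top] at hball
      refine le_trans ?_ hball
      simpa using RM.abs_le_sup (fun i => (x - X j) i) t
  have hxR : ∀ (j : Fin N) (x : Fin d → ℝ), lpNorm p (x - X j) ≤ σ →
      ∀ m : Fin d, 0 ≤ x m + R := by
    intro j x hball m
    have h1 := abs_le.1 (hcoord j x hball m)
    have h2 := abs_le.1 (Finset.le_sup' (fun q : Fin N × Fin d => |X q.1 q.2|)
      (Finset.mem_univ (j, m)))
    rw [hRdef]
    linarith [h1.1, h2.1]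
  set yv : Fin N → ℝ := fun i => (Y i : ℝ) with hyv
  have hyb : ∀ i, 1 ≤ yv i ∧ yv i ≤ Creal := fun i =>
    ⟨by show (1:ℝ) ≤ (Y i : ℝ); exact_mod_cast (hY i).1,
     by show ((Y i : ℝ)) ≤ (C : ℝ); exact_mod_cast (hY i).2⟩
  -- generic construction from blocks
  have main : ∀ (blockOf : Fin N → List (RM.Layer k)) (c : ℕ),
      (∀ i, (blockOf i).length = c) → c ≤ 3 * d + 2 →
      (∀ (j : Fin N) (x : Fin d → ℝ), lpNorm p (x - X j) ≤ σ →
        ∀ (i : Fin N) (v A B E2 : ℝ), 0 ≤ v - A + B - E2 → v - A + B - E2 ≤ Creal →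
          ∃ aF : ℝ, RM.runLayers (blockOf i) (RM.stateFn d k R x v A B E2)
              = RM.stateFn d k R x (v - A + B - E2) aF
                  (max (yv i - (v - A + B - E2) + aF) 0)
                  (max (yv i - (v - A + B - E2) - aF) 0)
            ∧ 0 ≤ aF ∧ aF ≤ Creal ∧ (i = j → aF = Creal) ∧ (yv i ≠ yv j → aF = 0)) →
      ∃ net : MLP d 1, net.width = k ∧ (net.depth : ℝ) ≤ 5 * N * d ∧
        RobustMem p σ X Y (fun x => net.eval x 0) := by
    intro blockOf c hlen hcle hblocks
    set ls := (List.finRange N).flatMap blockOf with hls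
    refine ⟨MLP.cons (RM.firstLayerW d k) (RM.firstLayerb d k R)
      (RM.chain ls (RM.lastLayerW d k) 0), ?_, ?_, ?_⟩
    · show max k (RM.chain ls (RM.lastLayerW d k) 0).width = k
      exact max_eq_left (RM.chain_width_le ls _ _)
    · have hdep : (MLP.cons (RM.firstLayerW d k) (RM.firstLayerb d k R)
          (RM.chain ls (RM.lastLayerW d k) 0)).depth = ls.length + 2 := by
        show (RM.chain ls (RM.lastLayerW d k) 0).depth + 1 = _
        rw [RM.chain_depth]
      rw [hdep]
      have hlsl : ls.length = N * c := by
        rw [hls, RM.flatMap_length_const blockOf c hlen, List.length_finRange]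
      rw [hlsl]
      have hNc : (N * c + 2 : ℕ) ≤ N * (3 * d + 2) + 2 :=
        Nat.add_le_add_right (Nat.mul_le_mul_left N hcle) 2
      have hN2 : (2:ℝ) ≤ (N:ℝ) := by exact_mod_cast hN
      have hdr : (2:ℝ) ≤ (d:ℝ) := by exact_mod_cast hd2
      have hcast : ((N * c + 2 : ℕ) : ℝ) ≤ ((N * (3 * d + 2) + 2 : ℕ) : ℝ) := by
        exact_mod_cast hNc
      refine le_trans hcast ?_
      push_cast
      have h1 : 2 * (N:ℝ) ≤ (N:ℝ) * (d:ℝ) := by nlinarith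
      nlinarith
    · intro j x hball
      show MLP.eval _ x 0 = (Y j : ℝ)
      have hx := hxR j x hball
      show (RM.chain ls (RM.lastLayerW d k) 0).eval
        (fun i => max (((RM.firstLayerW d k).mulVec x + RM.firstLayerb d k R) i) 0) 0 = _
      rw [RM.first_layer_eval hk R x hx, RM.chain_eval]
      obtain ⟨v', A', B', E', hrun, h0', h1', hkeep, hmem⟩ :=
        RM.run_flatMap R x hC1 blockOf yv hyb j rfl (hblocks j x hball)
          (List.finRange N) 0 0 0 0 (by norm_num) (by simpa using hC0)
      rw [← hls] at hrun
      rw [hrun]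
      show ((RM.lastLayerW d k).mulVec (RM.stateFn d k R x v' A' B' E') + 0) 0 = (Y j : ℝ)
      rw [RM.last_layer_eval hk hd0]
      exact hmem (List.mem_finRange j)
  rcases hp with hp1 | hpT
  · -- p = 1
    refine main (fun i => RM.blockSum d k R K0 K1 Creal (X i) (yv i)) (d + 3) ?_ (by omega) ?_
    · intro i
      show (RM.blockSum d k R K0 K1 Creal (X i) (yv i)).length = d + 3
      rw [RM.blockSum]
      simp [RM.coordLayers_length]
    · intro j x hball i v A B E2 h0 h1
      have hτeq : 2 * τ = δ := by
        rw [hτdef, hp1, RM.cplus_one]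
        ring
      refine ⟨RM.clampv Creal (K0 - K1 * ∑ u ∈ Finset.range d,
          |RM.cval x u - RM.cval (X i) u|),
        RM.run_blockSum hk hd0 R K0 K1 Creal x (hxR j x hball) (X i) (yv i) v A B E2 hC0 h0,
        RM.clampv_nonneg hC0 _, RM.clampv_le hC0 _, ?_, ?_⟩
      · intro hij
        subst hij
        have hDσ : (∑ u ∈ Finset.range d, |RM.cval x u - RM.cval (X i) u|) ≤ σ := by
          rw [RM.sum_cval]
          rw [hp1, RM.lpNorm_one] at hball
          refine le_trans (le_of_eq ?_) hball
          simp
        refine RM.clampv_eq_top hC0 ?_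
        nlinarith [mul_le_mul_of_nonneg_left hDσ hK1nn]
      · intro hlab
        have hYij : Y i ≠ Y j := by
          intro hh
          exact hlab (by show ((Y i : ℝ)) = (Y j : ℝ); exact_mod_cast hh)
        have hsep' := hsep.1 i j hYij
        have t1 : lpNorm 2 (X i - X j) ≤ ∑ t, |(X i - X j) t| := RM.lpNorm_two_le_sum_abs _
        simp only [Pi.sub_apply] at t1
        have t2 : ∑ t, |X i t - X j t| ≤ (∑ t, |X i t - x t|) + ∑ t, |x t - X j t| :=
          RM.sum_abs_triangle (X i) (X j) x
        have t3 : ∑ t, |X i t - x t| = ∑ t, |x t - X i t| := by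
          refine Finset.sum_congr rfl fun t _ => abs_sub_comm _ _
        have t4 : ∑ t, |x t - X j t| ≤ σ := by
          rw [hp1, RM.lpNorm_one] at hball
          refine le_trans (le_of_eq ?_) hball
          simp
        have hfar : τ ≤ ∑ u ∈ Finset.range d, |RM.cval x u - RM.cval (X i) u| := by
          rw [RM.sum_cval]
          linarith
        refine RM.clampv_eq_bot ?_ hC0
        nlinarith [mul_le_mul_of_nonneg_left hfar hK1nn]
  · -- p = ⊤
    have hsd : (0:ℝ) < (d:ℝ) ^ ((1:ℝ)/2) := Real.rpow_pos_of_pos (by exact_mod_cast hd0) _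
    have hτeq : 2 * τ * ((d:ℝ) ^ ((1:ℝ)/2)) = δ := by
      rw [hτdef, hpT, RM.cplus_top]
      field_simp
    refine main (fun i => RM.blockInf d k R K0 K1 Creal (X i) (yv i)) (3 * d + 2) ?_ le_rfl ?_
    · intro i
      show (RM.blockInf d k R K0 K1 Creal (X i) (yv i)).length = 3 * d + 2
      rw [RM.blockInf]
      simp [RM.coordLayers_length]
      ring
    · intro j x hball i v A B E2 h0 h1
      refine ⟨RM.minv (RM.cval x) (RM.cval (X i)) K0 K1 Creal d,
        RM.run_blockInf hk hd0 R K0 K1 Creal x (hxR j x hball) (X i) (yv i) v A B E2 hC0 h0,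
        (RM.acc2_diff _ _ hC0 d).2, RM.minv_le_C d, ?_, ?_⟩
      · intro hij
        subst hij
        refine RM.minv_eq_C hC0 ?_
        intro u hu
        have hcu : |RM.cval x u - RM.cval (X i) u| ≤ σ := by
          rw [RM.cval_lt x hu, RM.cval_lt (X i) hu]
          exact hcoord i x hball ⟨u, hu⟩
        nlinarith [mul_le_mul_of_nonneg_left hcu hK1nn]
      · intro hlab
        have hYij : Y i ≠ Y j := by
          intro hh
          exact hlab (by show ((Y i : ℝ)) = (Y j : ℝ); exact_mod_cast hh)
        have hsep' := hsep.1 i j hYij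
        set S := ⨆ t, |x t - X i t| with hS
        have t1 : lpNorm 2 (X i - X j) ≤ (d:ℝ) ^ ((1:ℝ)/2) * ⨆ t, |(X i - X j) t| :=
          RM.lpNorm_two_le_sqrtd_sup _
        simp only [Pi.sub_apply] at t1
        have t2 : (⨆ t, |X i t - X j t|) ≤ (⨆ t, |X i t - x t|) + ⨆ t, |x t - X j t| :=
          RM.sup_abs_triangle (X i) (X j) x
        have t3 : (⨆ t, |X i t - x t|) = S := by
          rw [hS]
          congr 1
          funext t
          exact abs_sub_comm _ _
        have t4 : (⨆ t, |x t - X j t|) ≤ σ := by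
          refine RM.sup_le_of _ fun t => ?_
          exact hcoord j x hball t
        have hSτ : τ ≤ S := by
          have hS0 : 0 ≤ S := RM.sup_nonneg _
          have hd1 : δ ≤ (d:ℝ) ^ ((1:ℝ)/2) * (S + σ) := by nlinarith
          nlinarith
        obtain ⟨t, htmax⟩ := RM.exists_sup_attained (fun t => x t - X i t)
        have htτ : τ ≤ |x t - X i t| := le_trans hSτ htmax
        have hm1 := RM.minv_le (x := RM.cval x) (c := RM.cval (X i))
          (K0 := K0) (K1 := K1) (Creal := Creal) t.isLt
        have hm2 : RM.clampv Creal (K0 - K1 * |RM.cval x ↑t - RM.cval (X i) ↑t|) = 0 := by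
          refine RM.clampv_eq_bot ?_ hC0
          rw [RM.cval_lt x t.isLt, RM.cval_lt (X i) t.isLt]
          have h5 := mul_le_mul_of_nonneg_left htτ hK1nn
          have h6 : K0 = K1 * τ := hK0def
          simp only [Fin.eta]
          linarith
        have hm3 := (RM.acc2_diff (RM.cval x) (RM.cval (X i)) (K0 := K0) (K1 := K1) hC0 d).2
        linarith [hm1, hm3, hm2.le, hm2.ge]
end
end

section
/- Let D be a δ-separated dataset in ℝ^d, let σ < δ/2, let 1 ≤ k ≤ d, and let ε > 0. Then D is (σ, ε, k)-orthogonally preservable (i.e., (1/ε)·P (σ, k)-preserves D for some rank-k orthogonal projection matrix P) if and only if D is (σ, k)-preserved by some rank-k matrix M ∈ ℝ^{d×d} with spectral norm ‖M‖₂ = 1/ε. -/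
open scoped ENNReal BigOperators

noncomputable section

section Helpers
open Matrix

lemma lpNorm_two_eq' {d : ℕ} (x : Fin d → ℝ) :
    lpNorm 2 x = ‖(WithLp.equiv 2 (Fin d → ℝ)).symm x‖ := by
  rw [lpNorm, if_neg (by norm_num), EuclideanSpace.norm_eq]
  rw [Real.sqrt_eq_rpow]
  congr 1
  refine Finset.sum_congr rfl fun i _ => ?_
  rw [show ((2:ℝ≥0∞).toReal) = ((2:ℕ):ℝ) by norm_num, Real.rpow_natCast]
  simp [WithLp.equiv_symm_apply, sq_abs]

lemma lpNorm_mulVec' {m d : ℕ} (M : Matrix (Fin m) (Fin d) ℝ) (x : Fin d → ℝ) :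
    lpNorm 2 (M.mulVec x) =
      ‖Matrix.toEuclideanLin M ((WithLp.equiv 2 (Fin d → ℝ)).symm x)‖ := by
  rw [lpNorm_two_eq']; rfl

lemma lpNorm_two_nonneg' {d : ℕ} (x : Fin d → ℝ) : 0 ≤ lpNorm 2 x := by
  rw [lpNorm_two_eq']; exact norm_nonneg _

lemma lpNorm_two_smul' {d : ℕ} (c : ℝ) (x : Fin d → ℝ) :
    lpNorm 2 (c • x) = |c| * lpNorm 2 x := by
  rw [lpNorm_two_eq', lpNorm_two_eq' x, show (WithLp.equiv 2 (Fin d → ℝ)).symm (c • x)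
    = c • (WithLp.equiv 2 (Fin d → ℝ)).symm x from rfl, norm_smul, Real.norm_eq_abs]

lemma lpNorm_two_zero' {d : ℕ} : lpNorm 2 (0 : Fin d → ℝ) = 0 := by
  rw [show (0 : Fin d → ℝ) = (0:ℝ) • (0 : Fin d → ℝ) by simp, lpNorm_two_smul']; simp

lemma lpNorm_two_ne_zero' {d : ℕ} {x : Fin d → ℝ} (h : x ≠ 0) : lpNorm 2 x ≠ 0 := by
  rw [lpNorm_two_eq']
  simp only [ne_eq, norm_eq_zero]
  exact fun hx => h (congrArg (WithLp.equiv 2 (Fin d → ℝ)) hx)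

lemma matOpNorm_bddAbove' {m d : ℕ} (M : Matrix (Fin m) (Fin d) ℝ) :
    BddAbove {c | ∃ x : Fin d → ℝ, lpNorm 2 x ≤ 1 ∧ c = lpNorm 2 (M.mulVec x)} := by
  refine ⟨‖(LinearMap.toContinuousLinearMap (Matrix.toEuclideanLin M))‖, ?_⟩
  rintro c ⟨x, hx, rfl⟩
  rw [lpNorm_mulVec']
  calc ‖Matrix.toEuclideanLin M ((WithLp.equiv 2 (Fin d → ℝ)).symm x)‖
      = ‖(LinearMap.toContinuousLinearMap (Matrix.toEuclideanLin M))
          ((WithLp.equiv 2 (Fin d → ℝ)).symm x)‖ := rfl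
    _ ≤ ‖(LinearMap.toContinuousLinearMap (Matrix.toEuclideanLin M))‖
          * ‖(WithLp.equiv 2 (Fin d → ℝ)).symm x‖ := ContinuousLinearMap.le_opNorm _ _
    _ ≤ _ := by
        have := lpNorm_two_eq' x
        nlinarith [ContinuousLinearMap.opNorm_nonneg
          (LinearMap.toContinuousLinearMap (Matrix.toEuclideanLin M))]

lemma zero_mem_matset' {m d : ℕ} (M : Matrix (Fin m) (Fin d) ℝ) :
    (0:ℝ) ∈ {c | ∃ x : Fin d → ℝ, lpNorm 2 x ≤ 1 ∧ c = lpNorm 2 (M.mulVec x)} :=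
  ⟨0, by rw [lpNorm_two_zero']; norm_num, by rw [Matrix.mulVec_zero, lpNorm_two_zero']⟩

lemma mulVec_lpNorm_le' {m d : ℕ} (M : Matrix (Fin m) (Fin d) ℝ) (x : Fin d → ℝ) :
    lpNorm 2 (M.mulVec x) ≤ matOpNorm M * lpNorm 2 x := by
  by_cases h : x = 0
  · subst h
    rw [Matrix.mulVec_zero, lpNorm_two_zero', lpNorm_two_zero']; simp
  · have hn : lpNorm 2 x ≠ 0 := lpNorm_two_ne_zero' h
    have hpos : 0 < lpNorm 2 x := lt_of_le_of_ne (lpNorm_two_nonneg' x) (Ne.symm hn)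
    set n := lpNorm 2 x with hdefn
    have hmem : (lpNorm 2 (M.mulVec (n⁻¹ • x))) ∈
        {c | ∃ y : Fin d → ℝ, lpNorm 2 y ≤ 1 ∧ c = lpNorm 2 (M.mulVec y)} := by
      refine ⟨n⁻¹ • x, ?_, rfl⟩
      rw [lpNorm_two_smul', abs_of_pos (by positivity), inv_mul_cancel₀ hn]
    have hle : lpNorm 2 (M.mulVec (n⁻¹ • x)) ≤ matOpNorm M :=
      le_csSup (matOpNorm_bddAbove' M) hmem
    rw [Matrix.mulVec_smul, lpNorm_two_smul', abs_of_pos (by positivity)] at hle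
    calc lpNorm 2 (M.mulVec x) = n * (n⁻¹ * lpNorm 2 (M.mulVec x)) := by field_simp
      _ ≤ n * matOpNorm M := mul_le_mul_of_nonneg_left hle (le_of_lt hpos)
      _ = matOpNorm M * n := mul_comm _ _

lemma inner_symm_eq' {d : ℕ} (y x : Fin d → ℝ) :
    (inner ℝ ((WithLp.equiv 2 (Fin d → ℝ)).symm y) ((WithLp.equiv 2 (Fin d → ℝ)).symm x) : ℝ)
      = y ⬝ᵥ x := by
  simp [PiLp.inner_apply, dotProduct, WithLp.equiv_symm_apply, mul_comm]

lemma proj_contract' {d : ℕ} (P : Matrix (Fin d) (Fin d) ℝ) (h1 : P * P = P)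
    (h2 : P.transpose = P) (x : Fin d → ℝ) :
    lpNorm 2 (P.mulVec x) ≤ lpNorm 2 x := by
  have key : (P.mulVec x) ⬝ᵥ (P.mulVec x) = (P.mulVec x) ⬝ᵥ x := by
    conv_lhs => rw [Matrix.dotProduct_mulVec]
    rw [← Matrix.mulVec_transpose, h2, Matrix.mulVec_mulVec, h1]
  set a := (WithLp.equiv 2 (Fin d → ℝ)).symm (P.mulVec x)
  set b := (WithLp.equiv 2 (Fin d → ℝ)).symm x
  have h3 : ‖a‖ * ‖a‖ = (inner ℝ a b : ℝ) := by
    rw [← real_inner_self_eq_norm_mul_norm, inner_symm_eq', inner_symm_eq', key]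
  have h4 : (inner ℝ a b : ℝ) ≤ ‖a‖ * ‖b‖ := real_inner_le_norm a b
  rw [lpNorm_two_eq', lpNorm_two_eq']
  by_cases h : ‖a‖ = 0
  · rw [h]; exact norm_nonneg _
  · have : 0 < ‖a‖ := lt_of_le_of_ne (norm_nonneg a) (Ne.symm h)
    nlinarith

lemma rank_smul' {d : ℕ} (c : ℝ) (hc : c ≠ 0) (P : Matrix (Fin d) (Fin d) ℝ) :
    (c • P).rank = P.rank := by
  have h : LinearMap.range (c • P).mulVecLin = LinearMap.range P.mulVecLin := by
    have : (c • P).mulVecLin = c • P.mulVecLin := by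
      ext x i; simp [Matrix.smul_mulVec]
    rw [this, LinearMap.range_smul _ _ hc]
  unfold Matrix.rank
  rw [h]

lemma rank_eq_finrank_range_euclidean {d : ℕ} (M : Matrix (Fin d) (Fin d) ℝ) :
    M.rank = Module.finrank ℝ (LinearMap.range (Matrix.toEuclideanLin M)) := by
  rw [Matrix.rank_eq_finrank_range_toLin M (PiLp.basisFun 2 ℝ (Fin d))
    (PiLp.basisFun 2 ℝ (Fin d)), Matrix.toEuclideanLin_eq_toLin]

end Helpers

/-- **Equivalent characterizations of orthogonal preservability**. -/
theorem orthogonally_preservable_iff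
    (N d C k : ℕ) (σ δ ε : ℝ)
    (X : Fin N → Fin d → ℝ) (Y : Fin N → ℕ)
    (hY : ∀ i, 1 ≤ Y i ∧ Y i ≤ C) (hsep : Separated 2 δ X Y)
    (hσδ : σ < δ / 2) (hk1 : 1 ≤ k) (hkd : k ≤ d) (hε : 0 < ε) :
    (∃ P : Matrix (Fin d) (Fin d) ℝ, P * P = P ∧ P.transpose = P ∧ P.rank = k ∧
        Preserves σ X Y ((1 / ε) • P)) ↔
      (∃ M : Matrix (Fin d) (Fin d) ℝ, M.rank = k ∧ matOpNorm M = 1 / ε ∧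
        Preserves σ X Y M) := by
  constructor
  · rintro ⟨P, h1, h2, h3, h4⟩
    refine ⟨(1 / ε) • P, ?_, ?_, h4⟩
    · rw [rank_smul' _ (by positivity) P]; exact h3
    · -- matOpNorm ((1/ε) • P) = 1/ε
      have hεpos : (0:ℝ) < 1 / ε := by positivity
      apply le_antisymm
      · apply csSup_le ⟨0, zero_mem_matset' _⟩
        rintro c ⟨x, hx, rfl⟩
        rw [Matrix.smul_mulVec, lpNorm_two_smul', abs_of_pos hεpos]
        calc (1/ε) * lpNorm 2 (P.mulVec x) ≤ (1/ε) * lpNorm 2 x :=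
              mul_le_mul_of_nonneg_left (proj_contract' P h1 h2 x) (le_of_lt hεpos)
          _ ≤ (1/ε) * 1 := mul_le_mul_of_nonneg_left hx (le_of_lt hεpos)
          _ = 1/ε := mul_one _
      · -- 1/ε belongs to the set
        have hP0 : P ≠ 0 := by
          intro h
          rw [h, Matrix.rank_zero] at h3
          omega
        have : ∃ x0 : Fin d → ℝ, P.mulVec x0 ≠ 0 := by
          by_contra hall
          push_neg at hall
          apply hP0
          ext i j
          have := congrFun (hall (Pi.single j 1)) i
          simpa [Matrix.mulVec_single] using this
        obtain ⟨x0, hx0⟩ := this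
        set v := P.mulVec x0 with hv
        have hPv : P.mulVec v = v := by
          rw [hv, Matrix.mulVec_mulVec, h1]
        have hnv : lpNorm 2 v ≠ 0 := lpNorm_two_ne_zero' hx0
        have hnvpos : 0 < lpNorm 2 v :=
          lt_of_le_of_ne (lpNorm_two_nonneg' v) (Ne.symm hnv)
        set u := (lpNorm 2 v)⁻¹ • v with hu
        have hUu : lpNorm 2 u = 1 := by
          rw [hu, lpNorm_two_smul', abs_of_pos (by positivity), inv_mul_cancel₀ hnv]
        have hPu : P.mulVec u = u := by
          rw [hu, Matrix.mulVec_smul, hPv]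
        apply le_csSup (matOpNorm_bddAbove' _)
        refine ⟨u, le_of_eq hUu, ?_⟩
        rw [Matrix.smul_mulVec, hPu, lpNorm_two_smul', abs_of_pos (by positivity),
          hUu, mul_one]
  · rintro ⟨M, hrank, hnorm, hpres⟩
    set f := Matrix.toEuclideanLin M with hf
    set K := LinearMap.ker f with hK
    set U := Kᗮ with hU
    set pr : EuclideanSpace ℝ (Fin d) →ₗ[ℝ] EuclideanSpace ℝ (Fin d) :=
      U.subtype.comp (U.orthogonalProjectionOnto).toLinearMap with hpr
    have hpr_apply : ∀ v, pr v = (U.orthogonalProjectionOnto v : EuclideanSpace ℝ (Fin d)) :=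
      fun v => rfl
    set P : Matrix (Fin d) (Fin d) ℝ := Matrix.toEuclideanLin.symm pr with hPdef
    have htP : Matrix.toEuclideanLin P = pr := LinearEquiv.apply_symm_apply _ _
    have hPx : ∀ x : Fin d → ℝ, (WithLp.equiv 2 (Fin d → ℝ)).symm (P.mulVec x)
        = pr ((WithLp.equiv 2 (Fin d → ℝ)).symm x) := by
      intro x
      rw [← htP]; rfl
    have hPx' : ∀ x : Fin d → ℝ, P.mulVec x
        = WithLp.equiv 2 (Fin d → ℝ) (pr ((WithLp.equiv 2 (Fin d → ℝ)).symm x)) := by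
      intro x
      rw [← hPx x]
      rfl
    have hprpr : ∀ v, pr (pr v) = pr v := by
      intro v
      simp only [hpr_apply]
      rw [Submodule.orthogonalProjectionOnto_mem_subspace_eq_self ⟨_, (U.orthogonalProjectionOnto v).2⟩]
    -- P * P = P
    have hPP : P * P = P := by
      apply Matrix.toLin'.injective
      apply LinearMap.ext
      intro x
      simp only [Matrix.toLin'_apply]
      have : (WithLp.equiv 2 (Fin d → ℝ)).symm ((P * P).mulVec x)
          = (WithLp.equiv 2 (Fin d → ℝ)).symm (P.mulVec x) := by
        rw [← Matrix.mulVec_mulVec, hPx, hPx, hprpr]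
      exact congrArg (WithLp.equiv 2 (Fin d → ℝ)) this
    -- transpose
    have hPT : P.transpose = P := by
      ext i j
      have e1 : P.transpose i j = (P.mulVec (Pi.single i 1)) j := by
        simp [Matrix.mulVec_single, Matrix.transpose_apply]
      have e2 : P i j = (P.mulVec (Pi.single j 1)) i := by
        simp [Matrix.mulVec_single]
      have hsingle : ∀ m : Fin d, (WithLp.equiv 2 (Fin d → ℝ)).symm (Pi.single m 1)
          = EuclideanSpace.single m (1:ℝ) := fun _ => rfl
      have hval : ∀ (w : EuclideanSpace ℝ (Fin d)) (m : Fin d),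
          (WithLp.equiv 2 (Fin d → ℝ) w) m
            = (inner ℝ (EuclideanSpace.single m (1:ℝ)) w : ℝ) := by
        intro w m
        rw [EuclideanSpace.inner_single_left]
        simp
      rw [e1, e2, hPx' (Pi.single i 1), hPx' (Pi.single j 1), hsingle, hsingle,
        hval, hval, hpr_apply, hpr_apply]
      rw [show (inner ℝ (EuclideanSpace.single i (1:ℝ))
          ((U.orthogonalProjectionOnto (EuclideanSpace.single j 1) : EuclideanSpace ℝ (Fin d))) : ℝ)
        = inner ℝ ((U.orthogonalProjectionOnto (EuclideanSpace.single i 1) : EuclideanSpace ℝ (Fin d)))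
            (EuclideanSpace.single j (1:ℝ)) from
        (Submodule.inner_starProjection_left_eq_right U _ _).symm]
      rw [real_inner_comm]
    -- rank
    have hrangepr : LinearMap.range pr = U := by
      apply le_antisymm
      · rintro w ⟨v, rfl⟩
        rw [hpr_apply]
        exact (U.orthogonalProjectionOnto v).2
      · intro u hu
        exact ⟨u, by rw [hpr_apply,
          Submodule.orthogonalProjectionOnto_mem_subspace_eq_self ⟨u, hu⟩]⟩
    have hrankP : P.rank = k := by
      rw [rank_eq_finrank_range_euclidean, htP, hrangepr]
      have hfin : Module.finrank ℝ K + Module.finrank ℝ U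
          = Module.finrank ℝ (EuclideanSpace ℝ (Fin d)) :=
        Submodule.finrank_add_finrank_orthogonal K
      have hrn : Module.finrank ℝ (LinearMap.range f) + Module.finrank ℝ K
          = Module.finrank ℝ (EuclideanSpace ℝ (Fin d)) :=
        LinearMap.finrank_range_add_finrank_ker f
      have hrf : Module.finrank ℝ (LinearMap.range f) = k := by
        rw [← hrank, rank_eq_finrank_range_euclidean]
      omega
    refine ⟨P, hPP, hPT, hrankP, ?_⟩
    intro i j hij a a' ha ha'
    have h0 := hpres i j hij a a' ha ha'
    have hεpos : (0:ℝ) < 1 / ε := by positivity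
    -- key : ‖M w‖ ≤ (1/ε) ‖P w‖
    have key : ∀ w : Fin d → ℝ,
        lpNorm 2 (M.mulVec w) ≤ (1/ε) * lpNorm 2 (P.mulVec w) := by
      intro w
      set v := (WithLp.equiv 2 (Fin d → ℝ)).symm w with hvv
      have hmem : v - pr v ∈ K := by
        have : v - pr v ∈ Uᗮ := Submodule.sub_starProjection_mem_orthogonal (K := U) v
        rw [← Submodule.orthogonal_orthogonal K]
        exact this
      have hfv : f v = f (pr v) := by
        have h5 : f (v - pr v) = 0 := hmem
        rw [map_sub] at h5
        exact sub_eq_zero.mp h5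
      have e1 : lpNorm 2 (M.mulVec w) = ‖f v‖ := lpNorm_mulVec' M w
      have e2 : ‖f (pr v)‖ = lpNorm 2 (M.mulVec (P.mulVec w)) := by
        rw [lpNorm_mulVec' M (P.mulVec w), hPx w]
      calc lpNorm 2 (M.mulVec w) = ‖f (pr v)‖ := by rw [e1, hfv]
        _ = lpNorm 2 (M.mulVec (P.mulVec w)) := e2
        _ ≤ matOpNorm M * lpNorm 2 (P.mulVec w) := mulVec_lpNorm_le' M _
        _ = (1/ε) * lpNorm 2 (P.mulVec w) := by rw [hnorm]
    calc lpNorm 2 (a - a') ≤ lpNorm 2 (M.mulVec a - M.mulVec a') := h0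
      _ = lpNorm 2 (M.mulVec (a - a')) := by rw [Matrix.mulVec_sub]
      _ ≤ (1/ε) * lpNorm 2 (P.mulVec (a - a')) := key _
      _ = lpNorm 2 ((1/ε) • (P.mulVec (a - a'))) := by
          rw [lpNorm_two_smul', abs_of_pos hεpos]
      _ = lpNorm 2 (((1/ε) • P).mulVec (a - a')) := by
          rw [Matrix.smul_mulVec]
      _ = lpNorm 2 (((1/ε) • P).mulVec a - ((1/ε) • P).mulVec a') := by
          rw [Matrix.mulVec_sub]


end
end

section
/- Let p be a natural number with p ≥ 2 and let 0 < ε < 1/2. Then there is a universal constant C₀ such that there exists a feedforward ReLU neural network g : ℝ → ℝ of width 6 and depth at most C₀ · p · log₂(p·ε^{−1}) such that |g(α) − α^p| < ε for every α ∈ [0, 1]. -/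
open scoped ENNReal BigOperators

noncomputable section

namespace NNPow


/-! ### vector extraction lemmas -/

@[simp] lemma vec6_mk0 {α : Type*} (a b c d e f : α) (h : (0:ℕ) < 6) : ![a,b,c,d,e,f] ⟨0, h⟩ = a := rfl
@[simp] lemma vec6_mk1 {α : Type*} (a b c d e f : α) (h : (1:ℕ) < 6) : ![a,b,c,d,e,f] ⟨1, h⟩ = b := rfl
@[simp] lemma vec6_mk2 {α : Type*} (a b c d e f : α) (h : (2:ℕ) < 6) : ![a,b,c,d,e,f] ⟨2, h⟩ = c := rfl
@[simp] lemma vec6_mk3 {α : Type*} (a b c d e f : α) (h : (3:ℕ) < 6) : ![a,b,c,d,e,f] ⟨3, h⟩ = d := rfl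
@[simp] lemma vec6_mk4 {α : Type*} (a b c d e f : α) (h : (4:ℕ) < 6) : ![a,b,c,d,e,f] ⟨4, h⟩ = e := rfl
@[simp] lemma vec6_mk5 {α : Type*} (a b c d e f : α) (h : (5:ℕ) < 6) : ![a,b,c,d,e,f] ⟨5, h⟩ = f := rfl
@[simp] lemma vec6_n0 {α : Type*} (a b c d e f : α) : ![a,b,c,d,e,f] 0 = a := rfl
@[simp] lemma vec6_n1 {α : Type*} (a b c d e f : α) : ![a,b,c,d,e,f] 1 = b := rfl
@[simp] lemma vec6_n2 {α : Type*} (a b c d e f : α) : ![a,b,c,d,e,f] 2 = c := rfl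
@[simp] lemma vec6_n3 {α : Type*} (a b c d e f : α) : ![a,b,c,d,e,f] 3 = d := rfl
@[simp] lemma vec6_n4 {α : Type*} (a b c d e f : α) : ![a,b,c,d,e,f] 4 = e := rfl
@[simp] lemma vec6_n5 {α : Type*} (a b c d e f : α) : ![a,b,c,d,e,f] 5 = f := rfl
@[simp] lemma vec1_mk0 {α : Type*} (a : α) (h : (0:ℕ) < 1) : ![a] ⟨0, h⟩ = a := rfl

/-! ### the tent map and Yarotsky approximation of the square -/

def T (t : ℝ) : ℝ := 2 * max t 0 - 4 * max (t - 1/2) 0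

lemma T_mem {t : ℝ} (h0 : 0 ≤ t) (h1 : t ≤ 1) : 0 ≤ T t ∧ T t ≤ 1 := by
  rcases le_or_gt t (1/2) with h | h
  · rw [T, max_eq_left h0, max_eq_right (by linarith)]
    constructor <;> linarith
  · rw [T, max_eq_left h0, max_eq_left (by linarith)]
    constructor <;> linarith

lemma T_key {t : ℝ} (h0 : 0 ≤ t) (h1 : t ≤ 1) : t - T t/2 + (T t)^2/4 = t^2 := by
  rcases le_or_gt t (1/2) with h | h
  · rw [T, max_eq_left h0, max_eq_right (by linarith)]
    ring
  · rw [T, max_eq_left h0, max_eq_left (by linarith)]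
    ring

def Titer : ℕ → ℝ → ℝ
  | 0 => fun t => t
  | (k+1) => fun t => Titer k (T t)

lemma Titer_mem : ∀ (k : ℕ) {t : ℝ}, 0 ≤ t → t ≤ 1 → 0 ≤ Titer k t ∧ Titer k t ≤ 1
  | 0, t, h0, h1 => ⟨h0, h1⟩
  | (k+1), t, h0, h1 => Titer_mem k (T_mem h0 h1).1 (T_mem h0 h1).2

def QS (k : ℕ) (t : ℝ) : ℝ := ∑ j ∈ Finset.range k, (1/4:ℝ)^j * Titer (j+1) t

lemma QS_zero (t : ℝ) : QS 0 t = 0 := by simp [QS]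

lemma QS_succ (k : ℕ) (t : ℝ) : QS (k+1) t = T t + QS k (T t)/4 := by
  unfold QS
  rw [Finset.sum_range_succ']
  have h : ∀ i ∈ Finset.range k,
      ((1:ℝ)/4)^(i+1) * Titer (i+1+1) t = ((1/4:ℝ)^i * Titer (i+1) (T t))/4 := by
    intro i _
    rw [show Titer (i+1+1) t = Titer (i+1) (T t) from rfl, pow_succ]
    ring
  rw [Finset.sum_congr rfl h, ← Finset.sum_div]
  have : ((1:ℝ)/4)^0 * Titer (0+1) t = T t := by
    rw [show Titer (0+1) t = T t from rfl]; ring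
  rw [this]
  ring

lemma QS_nonneg (k : ℕ) {t : ℝ} (h0 : 0 ≤ t) (h1 : t ≤ 1) : 0 ≤ QS k t := by
  apply Finset.sum_nonneg
  intro j _
  exact mul_nonneg (by positivity) (Titer_mem (j+1) h0 h1).1

def Sq (k : ℕ) (t : ℝ) : ℝ := t - QS k t / 4

lemma Sq_bound : ∀ (k : ℕ) {t : ℝ}, 0 ≤ t → t ≤ 1 → |Sq k t - t^2| ≤ (1/4:ℝ)^k
  | 0, t, h0, h1 => by
      rw [Sq, QS_zero]
      rw [abs_le]
      constructor <;> nlinarith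
  | (k+1), t, h0, h1 => by
      have hT := T_mem h0 h1
      have ih := Sq_bound k hT.1 hT.2
      have key := T_key h0 h1
      have hrw : Sq (k+1) t - t^2 = (Sq k (T t) - (T t)^2)/4 := by
        rw [Sq, QS_succ, Sq]
        linear_combination key
      rw [hrw]
      calc |(Sq k (T t) - (T t)^2)/4| = |Sq k (T t) - (T t)^2|/4 := by
            rw [abs_div]; norm_num
        _ ≤ (1/4:ℝ)^k/4 := by linarith
        _ = (1/4:ℝ)^(k+1) := by rw [pow_succ]; ring

/-! ### approximate multiplication, clipping -/

def mulA (k : ℕ) (x y : ℝ) : ℝ := (x+y)/2 - QS k ((x+y)/2)/2 + QS k x/8 + QS k y/8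

lemma mulA_eq (k : ℕ) (x y : ℝ) :
    mulA k x y = 2*Sq k ((x+y)/2) - Sq k x/2 - Sq k y/2 := by
  unfold mulA Sq; ring

lemma mulA_err (k : ℕ) {x y : ℝ} (hx0 : 0 ≤ x) (hx1 : x ≤ 1) (hy0 : 0 ≤ y) (hy1 : y ≤ 1) :
    |mulA k x y - x*y| ≤ 3*(1/4:ℝ)^k := by
  have hu := Sq_bound k (t := (x+y)/2) (by linarith) (by linarith)
  have hx := Sq_bound k hx0 hx1
  have hy := Sq_bound k hy0 hy1
  rw [mulA_eq]
  have hrw : 2*Sq k ((x+y)/2) - Sq k x/2 - Sq k y/2 - x*y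
      = 2*(Sq k ((x+y)/2) - ((x+y)/2)^2) - (Sq k x - x^2)/2 - (Sq k y - y^2)/2 := by ring
  rw [hrw]
  rw [abs_le] at hu hx hy ⊢
  constructor <;> nlinarith

def clip (x : ℝ) : ℝ := max x 0 - max (x-1) 0

lemma clip_def (x : ℝ) : clip x = max x 0 - max (x-1) 0 := rfl

lemma clip_mem (x : ℝ) : 0 ≤ clip x ∧ clip x ≤ 1 := by
  unfold clip
  rcases le_total x 0 with h | h
  · rw [max_eq_right h, max_eq_right (by linarith)]; norm_num
  · rcases le_total x 1 with h1 | h1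
    · rw [max_eq_left h, max_eq_right (by linarith)]
      constructor <;> linarith
    · rw [max_eq_left h, max_eq_left (by linarith)]
      constructor <;> linarith

lemma clip_of_mem {x : ℝ} (h0 : 0 ≤ x) (h1 : x ≤ 1) : clip x = x := by
  unfold clip
  rw [max_eq_left h0, max_eq_right (by linarith)]
  ring

lemma clip_err {a b : ℝ} (hb0 : 0 ≤ b) (hb1 : b ≤ 1) : |clip a - b| ≤ |a - b| := by
  unfold clip
  rcases le_total a 0 with h | h
  · rw [max_eq_right h, max_eq_right (by linarith)]
    rw [abs_of_nonpos (by linarith), abs_of_nonpos (by linarith)]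
    linarith
  · rcases le_total a 1 with h1 | h1
    · rw [max_eq_left h, max_eq_right (by linarith)]
      simp
    · rw [max_eq_left h, max_eq_left (by linarith)]
      rw [abs_of_nonneg (by linarith), abs_of_nonneg (by linarith)]
      linarith

/-! ### the iterated multiplication scheme -/

def Gits (k : ℕ) (α : ℝ) : ℕ → ℝ → ℝ
  | 0, q => q
  | (j+1), q => Gits k α j (mulA k α (clip q))

lemma Gits_err (k : ℕ) {α : ℝ} (h0 : 0 ≤ α) (h1 : α ≤ 1) :
    ∀ (j : ℕ) (q : ℝ) (m : ℕ) (e : ℝ), |clip q - α^m| ≤ e →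
      |clip (Gits k α j q) - α^(m+j)| ≤ e + 3*(j:ℝ)*(1/4:ℝ)^k := by
  intro j
  induction j with
  | zero => intro q m e h; simpa [Gits] using h
  | succ j ih =>
    intro q m e h
    have hq := clip_mem q
    have hmul : |mulA k α (clip q) - α * clip q| ≤ 3*(1/4:ℝ)^k :=
      mulA_err k h0 h1 hq.1 hq.2
    have hstep : |clip (mulA k α (clip q)) - α^(m+1)| ≤ e + 3*(1/4:ℝ)^k := by
      have habs : |α| ≤ 1 := abs_le.mpr ⟨by linarith, h1⟩
      have h2 : |mulA k α (clip q) - α^(m+1)| ≤ e + 3*(1/4:ℝ)^k := by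
        have hr : mulA k α (clip q) - α^(m+1)
            = (mulA k α (clip q) - α * clip q) + α * (clip q - α^m) := by
          rw [pow_succ]; ring
        rw [hr]
        calc |(mulA k α (clip q) - α * clip q) + α * (clip q - α^m)|
            ≤ |mulA k α (clip q) - α * clip q| + |α * (clip q - α^m)| := abs_add_le _ _
          _ ≤ 3*(1/4:ℝ)^k + |clip q - α^m| := by
              rw [abs_mul]
              have hn := abs_nonneg (clip q - α^m)
              nlinarith
          _ ≤ e + 3*(1/4:ℝ)^k := by linarith
      exact le_trans (clip_err (pow_nonneg h0 _) (pow_le_one₀ h0 h1)) h2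
    have hmain := ih (mulA k α (clip q)) (m+1) (e + 3*(1/4:ℝ)^k) hstep
    have hg : Gits k α (j+1) q = Gits k α j (mulA k α (clip q)) := rfl
    have he : m + (j+1) = m + 1 + j := by omega
    rw [hg, he]
    push_cast
    calc |clip (Gits k α j (mulA k α (clip q))) - α ^ (m+1+j)|
        ≤ e + 3*(1/4:ℝ)^k + 3*(j:ℝ)*(1/4:ℝ)^k := hmain
      _ ≤ e + 3*((j:ℝ)+1)*(1/4:ℝ)^k := by nlinarith [pow_nonneg (by norm_num : (0:ℝ) ≤ 1/4) k]


/-! ### MLP combinators -/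


def _root_.MLP.append : {a b c : ℕ} → MLP a b → MLP b c → MLP a c
  | _, _, _, .last W bv, h => .cons W bv h
  | _, _, _, .cons W bv rest, h => .cons W bv (MLP.append rest h)

def Rval {m n : ℕ} (f : MLP m n) (v : Fin m → ℝ) : Fin n → ℝ := fun i => max (f.eval v i) 0

theorem _root_.MLP.eval_append : ∀ {a b c : ℕ} (f : MLP a b) (h : MLP b c) (x : Fin a → ℝ),
    (f.append h).eval x = h.eval (Rval f x)
  | _, _, _, .last W bv, h, x => rfl
  | _, _, _, .cons W bv rest, h, x => by
      show (rest.append h).eval _ = _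
      rw [MLP.eval_append rest h]
      rfl

lemma Rval_append {a b c : ℕ} (f : MLP a b) (h : MLP b c) (v : Fin a → ℝ) :
    Rval (f.append h) v = Rval h (Rval f v) := by
  unfold Rval
  rw [MLP.eval_append]
  rfl

theorem _root_.MLP.depth_append : ∀ {a b c : ℕ} (f : MLP a b) (h : MLP b c),
    (f.append h).depth = f.depth + h.depth
  | _, _, _, .last W bv, h => by
      show h.depth + 1 = 1 + h.depth
      omega
  | _, _, _, .cons W bv rest, h => by
      show (rest.append h).depth + 1 = rest.depth + 1 + h.depth
      rw [MLP.depth_append rest h]; omega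

theorem _root_.MLP.width_append : ∀ {a b c : ℕ} (f : MLP a b) (h : MLP b c),
    (f.append h).width = max f.width (max b h.width)
  | _, _, _, .last W bv, h => by
      show max _ h.width = max 0 (max _ h.width)
      omega
  | _, _, _, @MLP.cons _ hd _ W bv rest, h => by
      show max hd ((rest.append h).width) = max (max hd rest.width) _
      rw [MLP.width_append rest h]; omega

/-! ### layers -/

def idL : MLP 6 6 := .last 1 0

lemma Rval_idL (v : Fin 6 → ℝ) : Rval idL v = fun i => max (v i) 0 := by
  funext i
  simp [Rval, idL, MLP.eval, Matrix.one_mulVec]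

def inputL : MLP 1 6 := .last (Matrix.of ![![1],![1],![0],![0],![0],![0]]) ![0,0,0,0,0,0]

lemma Rval_inputL {α : ℝ} (h0 : 0 ≤ α) (h1 : α ≤ 1) :
    Rval inputL (fun _ => α) = ![α, max α 0, max (α-1) 0, 0, 0, 0] := by
  funext i
  fin_cases i <;>
    simp only [Rval, inputL, MLP.eval, Matrix.mulVec, dotProduct, Matrix.of_apply,
      Pi.add_apply, Fin.sum_univ_one, Fin.isValue, vec6_mk0, vec6_mk1, vec6_mk2, vec6_mk3,
      vec6_mk4, vec6_mk5, vec6_n0, vec6_n1, vec6_n2, vec6_n3, vec6_n4, vec6_n5, vec1_mk0,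
      Matrix.cons_val_zero]
  · rw [show (1:ℝ)*α + 0 = α by ring]; exact max_eq_left h0
  · rw [show (1:ℝ)*α + 0 = α by ring]
  · rw [show (0:ℝ)*α + 0 = 0 by ring, max_self, eq_comm]
    exact max_eq_right (by linarith)
  · rw [show (0:ℝ)*α + 0 = 0 by ring, max_self]
  · rw [show (0:ℝ)*α + 0 = 0 by ring, max_self]
  · rw [show (0:ℝ)*α + 0 = 0 by ring, max_self]

def initU : MLP 6 6 :=
  .last (Matrix.of ![![1,0,0,0,0,0],![0,1,-1,0,0,0],![0,0,0,0,0,0],![0,0,0,0,0,0],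
    ![1/2,1/2,-(1/2),0,0,0],![1/2,1/2,-(1/2),0,0,0]]) ![0,0,0,0,0,-(1/2)]

lemma Rval_initU {α z : ℝ} (c1 c2 x3 x4 x5 : ℝ) (hα : 0 ≤ α) (hz : c1 - c2 = z) (hz0 : 0 ≤ z) :
    Rval initU ![α, c1, c2, x3, x4, x5] =
      ![α, z, 0, 0, max ((α + z)/2) 0, max ((α + z)/2 - 1/2) 0] := by
  funext i
  fin_cases i <;>
    simp only [Rval, initU, MLP.eval, Matrix.mulVec, dotProduct, Matrix.of_apply,
      Pi.add_apply, Fin.sum_univ_six, vec6_mk0, vec6_mk1, vec6_mk2, vec6_mk3,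
      vec6_mk4, vec6_mk5, vec6_n0, vec6_n1, vec6_n2, vec6_n3, vec6_n4, vec6_n5]
  · rw [show (1:ℝ)*α + 0*c1 + 0*c2 + 0*x3 + 0*x4 + 0*x5 + 0 = α by ring]
    exact max_eq_left hα
  · rw [show (0:ℝ)*α + 1*c1 + (-1)*c2 + 0*x3 + 0*x4 + 0*x5 + 0 = z by rw [← hz]; ring]
    exact max_eq_left hz0
  · rw [show (0:ℝ)*α + 0*c1 + 0*c2 + 0*x3 + 0*x4 + 0*x5 + 0 = 0 by ring, max_self]
  · rw [show (0:ℝ)*α + 0*c1 + 0*c2 + 0*x3 + 0*x4 + 0*x5 + 0 = 0 by ring, max_self]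
  · rw [show (1/2:ℝ)*α + 1/2*c1 + (-(1/2))*c2 + 0*x3 + 0*x4 + 0*x5 + 0 = (α+z)/2 by
      rw [← hz]; ring]
  · rw [show (1/2:ℝ)*α + 1/2*c1 + (-(1/2))*c2 + 0*x3 + 0*x4 + 0*x5 + -(1/2) = (α+z)/2 - 1/2 by
      rw [← hz]; ring]

def loopL (cP cN : ℝ) : MLP 6 6 :=
  .last (Matrix.of ![![1,0,0,0,0,0],![0,1,0,0,0,0],![0,0,1,0,2*cP,-(4*cP)],
    ![0,0,0,1,2*cN,-(4*cN)],![0,0,0,0,2,-4],![0,0,0,0,2,-4]]) ![0,0,0,0,0,-(1/2)]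

lemma Rval_loopL {cP cN t α z P N : ℝ} (hcP : 0 ≤ cP) (hcN : 0 ≤ cN) (hα : 0 ≤ α)
    (hz : 0 ≤ z) (hP : 0 ≤ P) (hN : 0 ≤ N) (ht0 : 0 ≤ t) (ht1 : t ≤ 1) :
    Rval (loopL cP cN) ![α, z, P, N, max t 0, max (t - 1/2) 0]
      = ![α, z, P + cP * T t, N + cN * T t, max (T t) 0, max (T t - 1/2) 0] := by
  have hT := T_mem ht0 ht1
  have hTdef : T t = 2 * max t 0 - 4 * max (t - 1/2) 0 := rfl
  funext i
  fin_cases i <;>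
    simp only [Rval, loopL, MLP.eval, Matrix.mulVec, dotProduct, Matrix.of_apply,
      Pi.add_apply, Fin.sum_univ_six, vec6_mk0, vec6_mk1, vec6_mk2, vec6_mk3,
      vec6_mk4, vec6_mk5, vec6_n0, vec6_n1, vec6_n2, vec6_n3, vec6_n4, vec6_n5]
  · rw [show (1:ℝ)*α + 0*z + 0*P + 0*N + 0*(max t 0) + 0*(max (t-1/2) 0) + 0 = α by ring]
    exact max_eq_left hα
  · rw [show (0:ℝ)*α + 1*z + 0*P + 0*N + 0*(max t 0) + 0*(max (t-1/2) 0) + 0 = z by ring]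
    exact max_eq_left hz
  · rw [show (0:ℝ)*α + 0*z + 1*P + 0*N + (2*cP)*(max t 0) + (-(4*cP))*(max (t-1/2) 0) + 0
        = P + cP * T t by rw [hTdef]; ring]
    exact max_eq_left (by nlinarith [hT.1])
  · rw [show (0:ℝ)*α + 0*z + 0*P + 1*N + (2*cN)*(max t 0) + (-(4*cN))*(max (t-1/2) 0) + 0
        = N + cN * T t by rw [hTdef]; ring]
    exact max_eq_left (by nlinarith [hT.1])
  · rw [show (0:ℝ)*α + 0*z + 0*P + 0*N + 2*(max t 0) + (-4)*(max (t-1/2) 0) + 0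
        = T t by rw [hTdef]; ring]
  · rw [show (0:ℝ)*α + 0*z + 0*P + 0*N + 2*(max t 0) + (-4)*(max (t-1/2) 0) + -(1/2)
        = T t - 1/2 by rw [hTdef]; ring]

def initZ : MLP 6 6 :=
  .last (Matrix.of ![![1,0,0,0,0,0],![0,1,0,0,0,0],![0,0,1,0,0,0],![0,0,0,1,0,0],
    ![0,1,0,0,0,0],![0,1,0,0,0,0]]) ![0,0,0,0,0,-(1/2)]

lemma Rval_initZ {α z P N : ℝ} (x4 x5 : ℝ) (hα : 0 ≤ α) (hz : 0 ≤ z) (hP : 0 ≤ P)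
    (hN : 0 ≤ N) :
    Rval initZ ![α, z, P, N, x4, x5] = ![α, z, P, N, max z 0, max (z - 1/2) 0] := by
  funext i
  fin_cases i <;>
    simp only [Rval, initZ, MLP.eval, Matrix.mulVec, dotProduct, Matrix.of_apply,
      Pi.add_apply, Fin.sum_univ_six, vec6_mk0, vec6_mk1, vec6_mk2, vec6_mk3,
      vec6_mk4, vec6_mk5, vec6_n0, vec6_n1, vec6_n2, vec6_n3, vec6_n4, vec6_n5]
  · rw [show (1:ℝ)*α + 0*z + 0*P + 0*N + 0*x4 + 0*x5 + 0 = α by ring]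
    exact max_eq_left hα
  · rw [show (0:ℝ)*α + 1*z + 0*P + 0*N + 0*x4 + 0*x5 + 0 = z by ring]
    exact max_eq_left hz
  · rw [show (0:ℝ)*α + 0*z + 1*P + 0*N + 0*x4 + 0*x5 + 0 = P by ring]
    exact max_eq_left hP
  · rw [show (0:ℝ)*α + 0*z + 0*P + 1*N + 0*x4 + 0*x5 + 0 = N by ring]
    exact max_eq_left hN
  · rw [show (0:ℝ)*α + 1*z + 0*P + 0*N + 0*x4 + 0*x5 + 0 = z by ring]
  · rw [show (0:ℝ)*α + 1*z + 0*P + 0*N + 0*x4 + 0*x5 + -(1/2) = z - 1/2 by ring]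

def initA : MLP 6 6 :=
  .last (Matrix.of ![![1,0,0,0,0,0],![0,1,0,0,0,0],![0,0,1,0,0,0],![0,0,0,1,0,0],
    ![1,0,0,0,0,0],![1,0,0,0,0,0]]) ![0,0,0,0,0,-(1/2)]

lemma Rval_initA {α z P N : ℝ} (x4 x5 : ℝ) (hα : 0 ≤ α) (hz : 0 ≤ z) (hP : 0 ≤ P)
    (hN : 0 ≤ N) :
    Rval initA ![α, z, P, N, x4, x5] = ![α, z, P, N, max α 0, max (α - 1/2) 0] := by
  funext i
  fin_cases i <;>
    simp only [Rval, initA, MLP.eval, Matrix.mulVec, dotProduct, Matrix.of_apply,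
      Pi.add_apply, Fin.sum_univ_six, vec6_mk0, vec6_mk1, vec6_mk2, vec6_mk3,
      vec6_mk4, vec6_mk5, vec6_n0, vec6_n1, vec6_n2, vec6_n3, vec6_n4, vec6_n5]
  · rw [show (1:ℝ)*α + 0*z + 0*P + 0*N + 0*x4 + 0*x5 + 0 = α by ring]
    exact max_eq_left hα
  · rw [show (0:ℝ)*α + 1*z + 0*P + 0*N + 0*x4 + 0*x5 + 0 = z by ring]
    exact max_eq_left hz
  · rw [show (0:ℝ)*α + 0*z + 1*P + 0*N + 0*x4 + 0*x5 + 0 = P by ring]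
    exact max_eq_left hP
  · rw [show (0:ℝ)*α + 0*z + 0*P + 1*N + 0*x4 + 0*x5 + 0 = N by ring]
    exact max_eq_left hN
  · rw [show (1:ℝ)*α + 0*z + 0*P + 0*N + 0*x4 + 0*x5 + 0 = α by ring]
  · rw [show (1:ℝ)*α + 0*z + 0*P + 0*N + 0*x4 + 0*x5 + -(1/2) = α - 1/2 by ring]

def clipL : MLP 6 6 :=
  .last (Matrix.of ![![1,0,0,0,0,0],![1/2,1/2,-1,1,0,0],![1/2,1/2,-1,1,0,0],
    ![0,0,0,0,0,0],![0,0,0,0,0,0],![0,0,0,0,0,0]]) ![0,0,-1,0,0,0]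

lemma Rval_clipL {α z P N : ℝ} (x4 x5 : ℝ) (hα : 0 ≤ α) :
    Rval clipL ![α, z, P, N, x4, x5]
      = ![α, max ((α + z)/2 - P + N) 0, max ((α + z)/2 - P + N - 1) 0, 0, 0, 0] := by
  funext i
  fin_cases i <;>
    simp only [Rval, clipL, MLP.eval, Matrix.mulVec, dotProduct, Matrix.of_apply,
      Pi.add_apply, Fin.sum_univ_six, vec6_mk0, vec6_mk1, vec6_mk2, vec6_mk3,
      vec6_mk4, vec6_mk5, vec6_n0, vec6_n1, vec6_n2, vec6_n3, vec6_n4, vec6_n5]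
  · rw [show (1:ℝ)*α + 0*z + 0*P + 0*N + 0*x4 + 0*x5 + 0 = α by ring]
    exact max_eq_left hα
  · rw [show (1/2:ℝ)*α + 1/2*z + (-1)*P + 1*N + 0*x4 + 0*x5 + 0 = (α+z)/2 - P + N by ring]
  · rw [show (1/2:ℝ)*α + 1/2*z + (-1)*P + 1*N + 0*x4 + 0*x5 + (-1) = (α+z)/2 - P + N - 1
      by ring]
  · rw [show (0:ℝ)*α + 0*z + 0*P + 0*N + 0*x4 + 0*x5 + 0 = 0 by ring, max_self]
  · rw [show (0:ℝ)*α + 0*z + 0*P + 0*N + 0*x4 + 0*x5 + 0 = 0 by ring, max_self]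
  · rw [show (0:ℝ)*α + 0*z + 0*P + 0*N + 0*x4 + 0*x5 + 0 = 0 by ring, max_self]

def finalL : MLP 6 1 := .last (Matrix.of ![![0,1,-1,0,0,0]]) ![0]

lemma eval_finalL (v : Fin 6 → ℝ) : finalL.eval v 0 = v 1 - v 2 := by
  simp only [finalL, MLP.eval, Matrix.mulVec, dotProduct, Matrix.of_apply,
    Pi.add_apply, Fin.sum_univ_six, Matrix.cons_val_zero, vec6_n0, vec6_n1, vec6_n2,
    vec6_n3, vec6_n4, vec6_n5]
  ring

/-! ### chains -/

def loopChain (cP cN : ℝ) : ℕ → MLP 6 6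
  | 0 => idL
  | (k+1) => (loopL cP cN).append (loopChain (cP/4) (cN/4) k)

lemma loopChain_eval : ∀ (k : ℕ) (cP cN t α z P N : ℝ), 0 ≤ cP → 0 ≤ cN → 0 ≤ α → 0 ≤ z →
    0 ≤ P → 0 ≤ N → 0 ≤ t → t ≤ 1 →
    Rval (loopChain cP cN k) ![α, z, P, N, max t 0, max (t - 1/2) 0]
      = ![α, z, P + cP * QS k t, N + cN * QS k t,
          max (Titer k t) 0, max (Titer k t - 1/2) 0]
  | 0, cP, cN, t, α, z, P, N, hcP, hcN, hα, hz, hP, hN, ht0, ht1 => by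
      show Rval idL _ = _
      rw [Rval_idL]
      funext i
      fin_cases i <;>
        simp only [vec6_mk0, vec6_mk1, vec6_mk2, vec6_mk3, vec6_mk4, vec6_mk5,
          vec6_n0, vec6_n1, vec6_n2, vec6_n3, vec6_n4, vec6_n5]
      · exact max_eq_left hα
      · exact max_eq_left hz
      · rw [QS_zero, mul_zero, add_zero]; exact max_eq_left hP
      · rw [QS_zero, mul_zero, add_zero]; exact max_eq_left hN
      · exact max_eq_left (le_max_right _ _)
      · exact max_eq_left (le_max_right _ _)
  | (k+1), cP, cN, t, α, z, P, N, hcP, hcN, hα, hz, hP, hN, ht0, ht1 => by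
      have hT := T_mem ht0 ht1
      show Rval ((loopL cP cN).append (loopChain (cP/4) (cN/4) k)) _ = _
      rw [Rval_append, Rval_loopL hcP hcN hα hz hP hN ht0 ht1,
        loopChain_eval k (cP/4) (cN/4) (T t) α z (P + cP * T t) (N + cN * T t)
          (by linarith) (by linarith) hα hz
          (by nlinarith [hT.1]) (by nlinarith [hT.1]) hT.1 hT.2]
      funext i
      fin_cases i <;>
        simp only [vec6_mk0, vec6_mk1, vec6_mk2, vec6_mk3, vec6_mk4, vec6_mk5,
          vec6_n0, vec6_n1, vec6_n2, vec6_n3, vec6_n4, vec6_n5]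
      · rw [QS_succ]; ring
      · rw [QS_succ]; ring
      · rfl
      · rfl

def block (k : ℕ) : MLP 6 6 :=
  initU.append ((loopChain (1/2) 0 k).append (initZ.append ((loopChain 0 (1/8) k).append
    (initA.append ((loopChain 0 (1/8) k).append clipL)))))

lemma block_eval (k : ℕ) (α q : ℝ) (hα0 : 0 ≤ α) (hα1 : α ≤ 1) :
    Rval (block k) ![α, max q 0, max (q-1) 0, 0, 0, 0]
      = ![α, max (mulA k α (clip q)) 0, max (mulA k α (clip q) - 1) 0, 0, 0, 0] := by
  have hz := clip_mem q
  set z := clip q with hzdef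
  have hu0 : 0 ≤ (α + z)/2 := by linarith [hz.1]
  have hu1 : (α + z)/2 ≤ 1 := by linarith [hz.2]
  have hQu : 0 ≤ QS k ((α + z)/2) := QS_nonneg k hu0 hu1
  have hQz : 0 ≤ QS k z := QS_nonneg k hz.1 hz.2
  have hQα : 0 ≤ QS k α := QS_nonneg k hα0 hα1
  show Rval (initU.append _) _ = _
  rw [Rval_append, Rval_initU (z := z) (max q 0) (max (q-1) 0) 0 0 0 hα0
      ((clip_def q).symm.trans hzdef.symm) hz.1,
    Rval_append, loopChain_eval k (1/2) 0 ((α + z)/2) α z 0 0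
      (by norm_num) (by norm_num) hα0 hz.1 le_rfl le_rfl hu0 hu1,
    Rval_append, Rval_initZ _ _ hα0 hz.1 (by linarith) (by linarith),
    Rval_append, loopChain_eval k 0 (1/8) z α z (0 + 1/2 * QS k ((α + z)/2))
      (0 + 0 * QS k ((α + z)/2)) (by norm_num) (by norm_num) hα0 hz.1
      (by linarith) (by linarith) hz.1 hz.2,
    Rval_append, Rval_initA _ _ hα0 hz.1 (by linarith) (by linarith),
    Rval_append, loopChain_eval k 0 (1/8) α α z
      (0 + 1/2 * QS k ((α + z)/2) + 0 * QS k z)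
      (0 + 0 * QS k ((α + z)/2) + 1/8 * QS k z) (by norm_num) (by norm_num)
      hα0 hz.1 (by linarith) (by linarith) hα0 hα1,
    Rval_clipL _ _ hα0]
  have hq : (α + z)/2 - (0 + 1/2 * QS k ((α + z)/2) + 0 * QS k z + 0 * QS k α)
      + (0 + 0 * QS k ((α + z)/2) + 1/8 * QS k z + 1/8 * QS k α) = mulA k α z := by
    unfold mulA
    ring
  rw [hq]

def blocks (k : ℕ) : ℕ → MLP 6 6
  | 0 => idL
  | (j+1) => (block k).append (blocks k j)

lemma blocks_eval (k : ℕ) {α : ℝ} (hα0 : 0 ≤ α) (hα1 : α ≤ 1) :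
    ∀ (j : ℕ) (q : ℝ), Rval (blocks k j) ![α, max q 0, max (q-1) 0, 0, 0, 0]
      = ![α, max (Gits k α j q) 0, max (Gits k α j q - 1) 0, 0, 0, 0]
  | 0, q => by
      show Rval idL _ = _
      rw [Rval_idL]
      funext i
      fin_cases i <;>
        simp only [vec6_mk0, vec6_mk1, vec6_mk2, vec6_mk3, vec6_mk4, vec6_mk5,
          vec6_n0, vec6_n1, vec6_n2, vec6_n3, vec6_n4, vec6_n5]
      · exact max_eq_left hα0
      · show max (max q 0) 0 = max (Gits k α 0 q) 0
        rw [show Gits k α 0 q = q from rfl, max_eq_left (le_max_right _ _)]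
      · show max (max (q-1) 0) 0 = max (Gits k α 0 q - 1) 0
        rw [show Gits k α 0 q = q from rfl, max_eq_left (le_max_right _ _)]
      · exact max_self 0
      · exact max_self 0
      · exact max_self 0
  | (j+1), q => by
      show Rval ((block k).append (blocks k j)) _ = _
      rw [Rval_append, block_eval k α q hα0 hα1,
        blocks_eval k hα0 hα1 j (mulA k α (clip q))]
      rfl

def net (k j : ℕ) : MLP 1 1 := inputL.append ((blocks k j).append finalL)

lemma net_eval (k j : ℕ) {α : ℝ} (h0 : 0 ≤ α) (h1 : α ≤ 1) :
    (net k j).eval (fun _ => α) 0 = clip (Gits k α j α) := by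
  show (inputL.append ((blocks k j).append finalL)).eval _ 0 = _
  rw [MLP.eval_append, MLP.eval_append, Rval_inputL h0 h1,
    show (![α, max α 0, max (α-1) 0, 0, 0, 0] : Fin 6 → ℝ)
      = ![α, max α 0, max (α-1) 0, 0, 0, 0] from rfl,
    blocks_eval k h0 h1 j α, eval_finalL]
  simp only [vec6_n1, vec6_n2]
  rfl

/-! ### depth and width -/

lemma depth_loopChain (cP cN : ℝ) : ∀ (k : ℕ), (loopChain cP cN k).depth = k + 1
  | 0 => rfl
  | (k+1) => by
      show ((loopL cP cN).append (loopChain (cP/4) (cN/4) k)).depth = _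
      rw [MLP.depth_append, depth_loopChain (cP/4) (cN/4) k]
      simp only [loopL, MLP.depth]
      omega

lemma depth_block (k : ℕ) : (block k).depth = 3*k + 7 := by
  unfold block
  rw [MLP.depth_append, MLP.depth_append, MLP.depth_append, MLP.depth_append,
    MLP.depth_append, MLP.depth_append, depth_loopChain, depth_loopChain]
  simp only [initU, initZ, initA, clipL, MLP.depth]
  omega

lemma depth_blocks (k : ℕ) : ∀ (j : ℕ), (blocks k j).depth = j*(3*k+7) + 1
  | 0 => by simp [blocks, idL, MLP.depth]
  | (j+1) => by
      show ((block k).append (blocks k j)).depth = _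
      rw [MLP.depth_append, depth_block, depth_blocks k j]
      ring

lemma depth_net (k j : ℕ) : (net k j).depth = j*(3*k+7) + 3 := by
  unfold net
  rw [MLP.depth_append, MLP.depth_append, depth_blocks]
  show 1 + (j*(3*k+7) + 1 + 1) = _
  omega

lemma width_loopChain (cP cN : ℝ) : ∀ (k : ℕ), (loopChain cP cN k).width ≤ 6
  | 0 => by show (idL).width ≤ 6; show (0:ℕ) ≤ 6; omega
  | (k+1) => by
      show ((loopL cP cN).append (loopChain (cP/4) (cN/4) k)).width ≤ 6
      rw [MLP.width_append]
      have := width_loopChain (cP/4) (cN/4) k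
      show max (MLP.width (.last _ _)) _ ≤ 6
      simp only [MLP.width]
      omega

lemma width_block (k : ℕ) : (block k).width ≤ 6 := by
  unfold block
  rw [MLP.width_append, MLP.width_append, MLP.width_append, MLP.width_append,
    MLP.width_append, MLP.width_append]
  have h1 := width_loopChain (1/2) 0 k
  have h2 := width_loopChain 0 (1/8) k
  simp only [initU, initZ, initA, clipL, MLP.width]
  omega

lemma width_blocks (k : ℕ) : ∀ (j : ℕ), (blocks k j).width ≤ 6
  | 0 => by show (0:ℕ) ≤ 6; omega
  | (j+1) => by
      show ((block k).append (blocks k j)).width ≤ 6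
      rw [MLP.width_append]
      have h1 := width_block k
      have h2 := width_blocks k j
      omega

lemma width_net (k j : ℕ) : (net k j).width = 6 := by
  unfold net
  rw [MLP.width_append, MLP.width_append]
  have h1 := width_blocks k j
  simp only [inputL, finalL, MLP.width]
  omega


end NNPow

set_option maxHeartbeats 1000000 in
/-- **Network approximation of the `p`-th power, natural `p ≥ 2`**. -/
theorem power_approximation_network_nat :
    ∃ C₀ : ℝ, 0 < C₀ ∧
      ∀ (p : ℕ) (ε : ℝ), 2 ≤ p → 0 < ε → ε < 1 / 2 →
        ∃ g : MLP 1 1, g.width = 6 ∧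
          (g.depth : ℝ) ≤ C₀ * p * Real.logb 2 ((p : ℝ) * ε⁻¹) ∧
          ∀ α : ℝ, 0 ≤ α → α ≤ 1 → |g.eval (fun _ => α) 0 - α ^ p| < ε := by
  refine ⟨100, by norm_num, ?_⟩
  intro p ε hp hε0 hε2
  have hp1 : 1 ≤ p := by omega
  have hpR : (2:ℝ) ≤ (p:ℝ) := by exact_mod_cast hp
  have hinv : (2:ℝ) ≤ ε⁻¹ := by
    rw [show (2:ℝ) = (1/2:ℝ)⁻¹ by norm_num]
    exact inv_anti₀ hε0 hε2.le
  have hxpos : (0:ℝ) < (p:ℝ) * ε⁻¹ := by nlinarith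
  set L := Real.logb 2 ((p:ℝ) * ε⁻¹) with hLdef
  have h4 : (4:ℝ) ≤ (p:ℝ) * ε⁻¹ := by nlinarith
  have hL2 : (2:ℝ) ≤ L := by
    have h1 : Real.logb 2 4 ≤ L :=
      Real.logb_le_logb_of_le (by norm_num) (by norm_num) h4
    have h2 : Real.logb 2 4 = 2 := by
      rw [show (4:ℝ) = 2^(2:ℕ) by norm_num, Real.logb_pow,
        Real.logb_self_eq_one (by norm_num)]
      norm_num
    linarith
  set k := ⌈L⌉₊ with hkdef
  have hkL : (k:ℝ) ≤ L + 1 := le_of_lt (Nat.ceil_lt_add_one (by linarith))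
  have hLk : L ≤ (k:ℝ) := Nat.le_ceil L
  refine ⟨NNPow.net k (p-1), NNPow.width_net k (p-1), ?_, ?_⟩
  · rw [NNPow.depth_net]
    have hcast : (((p-1)*(3*k+7) + 3 : ℕ) : ℝ) = ((p:ℝ)-1)*(3*(k:ℝ)+7) + 3 := by
      push_cast [Nat.cast_sub hp1]
      ring
    rw [hcast]
    have hA : (3:ℝ)*(k:ℝ)+7 ≤ 8*L := by linarith
    have hD : (4:ℝ) ≤ (p:ℝ)*L := by nlinarith
    nlinarith [mul_nonneg (by linarith : (0:ℝ) ≤ (p:ℝ)-1)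
      (by linarith : (0:ℝ) ≤ 8*L - (3*(k:ℝ)+7)), mul_nonneg (by linarith : (0:ℝ) ≤ (p:ℝ))
      (by linarith : (0:ℝ) ≤ L)]
  · intro α hα0 hα1
    rw [NNPow.net_eval k (p-1) hα0 hα1]
    have hstart : |NNPow.clip α - α^1| ≤ 0 := by
      rw [NNPow.clip_of_mem hα0 hα1, pow_one, sub_self, abs_zero]
    have h := NNPow.Gits_err k hα0 hα1 (p-1) α 1 0 hstart
    rw [show 1 + (p-1) = p by omega] at h
    have hppos : (0:ℝ) < (p:ℝ) := by linarith
    have h2k : (p:ℝ) * ε⁻¹ ≤ (2:ℝ)^k := by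
      have e1 : (p:ℝ) * ε⁻¹ = (2:ℝ)^(L:ℝ) :=
        (Real.rpow_logb (by norm_num) (by norm_num) hxpos).symm
      calc (p:ℝ)*ε⁻¹ = (2:ℝ)^(L:ℝ) := e1
        _ ≤ (2:ℝ)^((k:ℕ):ℝ) := Real.rpow_le_rpow_of_exponent_le (by norm_num) hLk
        _ = (2:ℝ)^(k:ℕ) := Real.rpow_natCast 2 k
    have hpow : ((1:ℝ)/4)^k ≤ (ε/(p:ℝ))^2 := by
      have e2 : ((1:ℝ)/4)^k = (((2:ℝ)^k)^2)⁻¹ := by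
        rw [show ((1:ℝ)/4) = (((2:ℝ)^2))⁻¹ by norm_num, inv_pow, ← pow_mul,
          mul_comm 2 k, pow_mul]
      have e3 : (ε/(p:ℝ))^2 = (((p:ℝ)*ε⁻¹)^2)⁻¹ := by
        rw [show ε/(p:ℝ) = ((p:ℝ)*ε⁻¹)⁻¹ by rw [mul_inv, inv_inv]; ring, inv_pow]
      rw [e2, e3]
      apply inv_anti₀ (by positivity)
      nlinarith [h2k, hxpos]
    have hcast2 : (((p-1:ℕ)):ℝ) = (p:ℝ) - 1 := by
      rw [Nat.cast_sub hp1]; norm_num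
    have hfin : (0:ℝ) + 3*(((p-1:ℕ)):ℝ)*((1/4:ℝ))^k < ε := by
      rw [hcast2]
      have hnn : (0:ℝ) ≤ 3*((p:ℝ)-1) := by linarith
      have h5 : 3*((p:ℝ)-1)*((1/4:ℝ))^k ≤ 3*((p:ℝ)-1)*(ε/(p:ℝ))^2 :=
        mul_le_mul_of_nonneg_left hpow hnn
      have hp2 : (0:ℝ) < (p:ℝ)^2 := by positivity
      have h6 : 3*((p:ℝ)-1)*(ε/(p:ℝ))^2 < ε := by
        rw [div_pow, ← mul_div_assoc, div_lt_iff₀ hp2]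
        have he2 : ε^2 < ε/2 := by nlinarith
        have hq1 : 3*((p:ℝ)-1)*ε^2 < 3*((p:ℝ)-1)*(ε/2) :=
          mul_lt_mul_of_pos_left he2 (by linarith : (0:ℝ) < 3*((p:ℝ)-1))
        have hpoly : (0:ℝ) ≤ (p:ℝ)^2 - (3/2)*(p:ℝ) + 3/2 := by
          nlinarith [sq_nonneg ((p:ℝ) - 3/4)]
        have hq2 : 3*((p:ℝ)-1)*(ε/2) ≤ ε*(p:ℝ)^2 := by
          nlinarith [mul_nonneg hε0.le hpoly]
        linarith
      linarith
    calc |NNPow.clip (NNPow.Gits k α (p-1) α) - α^p|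
        ≤ 0 + 3*(((p-1:ℕ)):ℝ)*((1/4:ℝ))^k := h
      _ < ε := hfin

end
end

section
/- Let p ∈ (1, ∞) be a real number that is not a natural number and let 0 < ε < 1. Define D = ⌈p·(πε)^{−1/⌊p⌋}⌉ + 2 and the polynomial P(x) = Σ_{i=0}^{D} C(p, i)·(x − 1)^i, where C(p, i) = p(p−1)⋯(p−i+1)/i! is the generalized binomial coefficient. Then |P(x) − x^p| < ε for every x ∈ [0, 1]. -/
open scoped ENNReal BigOperators

noncomputable section

lemma gchoose_zero (s : ℝ) : gchoose s 0 = 1 := by simp [gchoose]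

lemma prod_shift (p : ℝ) (n : ℕ) :
    ∏ i ∈ Finset.range (n+1), (p - (i:ℝ)) = p * ∏ i ∈ Finset.range n, (p - 1 - (i:ℝ)) := by
  rw [Finset.prod_range_succ' (fun i => p - (i:ℝ))]
  have : ∀ i ∈ Finset.range n, p - (((i:ℕ)+1 : ℕ):ℝ) = p - 1 - (i:ℝ) := by
    intro i _; push_cast; ring
  rw [Finset.prod_congr rfl this]
  push_cast; ring

lemma gchoose_succ (s : ℝ) (n : ℕ) :
    gchoose s (n+1) = gchoose s n * ((s - n) / (n+1)) := by
  rw [gchoose, gchoose, Finset.prod_range_succ, Nat.factorial_succ, div_mul_div_comm]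
  push_cast
  rw [mul_comm ((n:ℝ)+1)]

lemma mul_gchoose (p : ℝ) (n : ℕ) :
    ((n:ℝ)+1) * gchoose p (n+1) = p * gchoose (p-1) n := by
  have h1 : ((n:ℝ)+1) ≠ 0 := by positivity
  have h2 : ((n.factorial : ℝ)) ≠ 0 := by exact_mod_cast n.factorial_ne_zero
  rw [gchoose, gchoose, prod_shift, Nat.factorial_succ]
  push_cast
  field_simp

lemma gchoose_pascal (p : ℝ) (n : ℕ) :
    gchoose p (n+1) = gchoose (p-1) (n+1) + gchoose (p-1) n := by
  have h1 : ((n:ℝ)+1) ≠ 0 := by positivity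
  have h2 : ((n.factorial : ℝ)) ≠ 0 := by exact_mod_cast n.factorial_ne_zero
  rw [gchoose, gchoose, gchoose, prod_shift, Finset.prod_range_succ, Nat.factorial_succ]
  push_cast
  field_simp
  ring

lemma alt_sum (p : ℝ) (n : ℕ) :
    ∑ i ∈ Finset.range (n+1), gchoose p i * (-1:ℝ)^i = (-1:ℝ)^n * gchoose (p-1) n := by
  induction n with
  | zero => simp [gchoose]
  | succ n ih =>
    rw [Finset.sum_range_succ, ih, gchoose_pascal]
    ring
section Bfacts
variable {p : ℝ} {k : ℕ}

lemma factor_bounds (hk1 : 1 ≤ k) (hkp : (k:ℝ) < p) (hpk : p < k + 1) :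
    ∀ j ∈ Finset.range k, |p - 1 - (j:ℝ)| ≤ p := by
  intro j hj
  rw [Finset.mem_range] at hj
  have hj' : (j:ℝ) ≤ (k:ℝ) - 1 := by
    have : (j:ℝ) + 1 ≤ (k:ℝ) := by exact_mod_cast hj
    linarith
  rw [abs_of_nonneg (by linarith)]
  linarith [Nat.cast_nonneg (α := ℝ) j]

lemma B_base (hk1 : 1 ≤ k) (hkp : (k:ℝ) < p) (hpk : p < k + 1) :
    |gchoose (p-1) k| ≤ p^k / k := by
  have hp0 : 0 < p := by
    have : (1:ℝ) ≤ (k:ℝ) := by exact_mod_cast hk1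
    linarith
  have hnum : ∏ j ∈ Finset.range k, |p - 1 - (j:ℝ)| ≤ p ^ k := by
    calc ∏ j ∈ Finset.range k, |p - 1 - (j:ℝ)| ≤ ∏ j ∈ Finset.range k, p :=
          Finset.prod_le_prod (fun j _ => abs_nonneg _) (factor_bounds hk1 hkp hpk)
      _ = p ^ k := by rw [Finset.prod_const, Finset.card_range]
  have h1 : |gchoose (p-1) k| ≤ p^k / (k.factorial : ℝ) := by
    rw [gchoose, abs_div, Finset.abs_prod, abs_of_nonneg (by positivity : (0:ℝ) ≤ (k.factorial:ℝ))]
    exact (div_le_div_iff_of_pos_right (by exact_mod_cast k.factorial_pos)).mpr hnum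
  refine h1.trans ?_
  have hp0 : 0 < p := lt_of_le_of_lt (Nat.cast_nonneg k) hkp
  apply div_le_div_of_nonneg_left (by positivity) (by exact_mod_cast hk1)
  exact_mod_cast Nat.self_le_factorial k

lemma B_succ (hkp : (k:ℝ) < p) (hpk : p < k + 1) :
    ∀ n : ℕ, k ≤ n → |gchoose (p-1) (n+1)| = |gchoose (p-1) n| * ((n - (p-1))/(n+1)) := by
  intro n hn
  have hn' : (k:ℝ) ≤ (n:ℝ) := by exact_mod_cast hn
  have h2 : |((p-1) - (n:ℝ))/((n:ℝ)+1)| = ((n:ℝ)-(p-1))/((n:ℝ)+1) := by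
    rw [abs_div, abs_of_nonpos (by linarith), abs_of_pos (by positivity : (0:ℝ) < (n:ℝ)+1)]
    ring
  rw [gchoose_succ, abs_mul, h2]

lemma absg_p (hkp : (k:ℝ) < p) (hpk : p < k + 1) :
    ∀ n : ℕ, k ≤ n → |gchoose p (n+1)| = |gchoose (p-1) n| - |gchoose (p-1) (n+1)| := by
  intro n hn
  have hp0 : 0 < p := lt_of_le_of_lt (Nat.cast_nonneg k) hkp
  have hn1 : (0:ℝ) < (n:ℝ) + 1 := by positivity
  have h1 : |gchoose p (n+1)| = p * |gchoose (p-1) n| / (n+1) := by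
    have := mul_gchoose p n
    have h2 : gchoose p (n+1) = p * gchoose (p-1) n / ((n:ℝ)+1) := by
      field_simp at this ⊢; linarith [this]
    rw [h2, abs_div, abs_mul, abs_of_pos hp0, abs_of_pos hn1]
  rw [h1, B_succ hkp hpk n hn]
  field_simp
  ring

lemma B_tendsto_bound (hk1 : 1 ≤ k) (hkp : (k:ℝ) < p) (hpk : p < k + 1) :
    ∀ n : ℕ, k ≤ n → |gchoose (p-1) n| ≤ p^k / n := by
  intro n hn
  induction n, hn using Nat.le_induction with
  | base => exact B_base hk1 hkp hpk
  | succ n hn ih =>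
    have hp0 : 0 < p := lt_of_le_of_lt (Nat.cast_nonneg k) hkp
    have hn0 : (0:ℝ) < (n:ℝ) := by
      have : (1:ℝ) ≤ (n:ℝ) := by exact_mod_cast hk1.trans hn
      linarith
    rw [B_succ hkp hpk n hn]
    have hk1' : (1:ℝ) ≤ (k:ℝ) := by exact_mod_cast hk1
    have hn' : (k:ℝ) ≤ (n:ℝ) := by exact_mod_cast hn
    have hfrac : ((n:ℝ) - (p-1))/((n:ℝ)+1) ≤ (n:ℝ)/((n:ℝ)+1) := by
      apply (div_le_div_iff_of_pos_right (by positivity : (0:ℝ) < (n:ℝ)+1)).mpr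
      linarith
    calc |gchoose (p-1) n| * (((n:ℝ) - (p-1))/((n:ℝ)+1))
        ≤ (p^k / n) * ((n:ℝ)/((n:ℝ)+1)) := by
          apply mul_le_mul ih hfrac
            (div_nonneg (by linarith) (by positivity))
            (div_nonneg (pow_nonneg hp0.le k) (Nat.cast_nonneg n))
      _ = p^k / ((n:ℝ)+1) := by field_simp
      _ = p^k / (((n+1:ℕ)):ℝ) := by push_cast; ring

lemma telescope (hk1 : 1 ≤ k) (hkp : (k:ℝ) < p) (hpk : p < k + 1) (D : ℕ) (hD : k ≤ D) :
    ∀ n : ℕ, D ≤ n → ∑ i ∈ Finset.Ico (D+1) (n+1), |gchoose p i|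
      = |gchoose (p-1) D| - |gchoose (p-1) n| := by
  intro n hn
  induction n, hn using Nat.le_induction with
  | base => simp
  | succ n hn ih =>
    rw [Finset.sum_Ico_succ_top (by omega), ih, absg_p hkp hpk n (hD.trans hn)]
    ring
end Bfacts
lemma prod_range_add_two (n : ℕ) :
    ∏ j ∈ Finset.range n, ((j:ℝ)+2) = ((n+1).factorial : ℝ) := by
  induction n with
  | zero => simp
  | succ n ih =>
    rw [Finset.prod_range_succ, ih, Nat.factorial_succ (n+1)]
    push_cast
    ring

section MainBound
variable {p : ℝ} {k D : ℕ}

lemma main_bound_prod (hk1 : 1 ≤ k) (hkp : (k:ℝ) < p) (hpk : p < k + 1) (hD : k + 1 ≤ D) :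
    |gchoose (p-1) D| ≤
      ((p-1)/D)^(k-1) * ((p - k) * (1 - (p - k)) / ((D:ℝ) - k + 1)) := by
  have hk1' : (1:ℝ) ≤ (k:ℝ) := by exact_mod_cast hk1
  have hp0 : (0:ℝ) < p := by linarith
  have hq0 : (0:ℝ) < p - 1 := by linarith
  have hDk : (k:ℝ) + 1 ≤ (D:ℝ) := by exact_mod_cast hD
  have hD0 : (0:ℝ) < (D:ℝ) := by linarith
  have hqD : p - 1 ≤ (D:ℝ) := by linarith
  have hθ0 : (0:ℝ) ≤ p - k := by linarith
  have hθ1 : (0:ℝ) ≤ 1 - (p - k) := by linarith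
  -- numerator split
  have hkm1D : k - 1 ≤ D := by omega
  have hsplit : ∏ j ∈ Finset.range D, |p - 1 - (j:ℝ)| =
      (∏ j ∈ Finset.range (k-1), |p - 1 - (j:ℝ)|) *
        ((p - k) * ((1 - (p - k)) * ∏ j ∈ Finset.Ico (k+1) D, |p - 1 - (j:ℝ)|)) := by
    rw [← Finset.prod_range_mul_prod_Ico _ hkm1D]
    congr 1
    rw [Finset.prod_eq_prod_Ico_succ_bot (show k-1 < D by omega),
      show k-1+1 = k from by omega,
      Finset.prod_eq_prod_Ico_succ_bot (show k < D by omega)]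
    have e1 : |p - 1 - ((k-1 : ℕ):ℝ)| = p - k := by
      have : ((k-1:ℕ):ℝ) = (k:ℝ) - 1 := by
        push_cast [Nat.cast_sub hk1]; ring
      rw [this, abs_of_nonneg (by linarith)]
      ring
    have e2 : |p - 1 - ((k : ℕ):ℝ)| = 1 - (p - k) := by
      rw [abs_of_nonpos (by linarith)]
      ring
    rw [e1, e2]
  -- bound on first block
  have hP1 : ∏ j ∈ Finset.range (k-1), |p - 1 - (j:ℝ)| ≤
      ((p-1)/D)^(k-1) * ∏ j ∈ Finset.range (k-1), ((D:ℝ) - j) := by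
    rw [show ((p-1)/(D:ℝ))^(k-1) = ∏ _j ∈ Finset.range (k-1), ((p-1)/(D:ℝ)) from by
      rw [Finset.prod_const, Finset.card_range], ← Finset.prod_mul_distrib]
    apply Finset.prod_le_prod (fun j _ => abs_nonneg _)
    intro j hj
    rw [Finset.mem_range] at hj
    have hj2 : (j:ℝ) + 2 ≤ (k:ℝ) := by
      have : j + 2 ≤ k := by omega
      exact_mod_cast this
    have hj0 : (0:ℝ) ≤ (j:ℝ) := Nat.cast_nonneg j
    rw [abs_of_nonneg (by linarith)]
    rw [div_mul_eq_mul_div, le_div_iff₀ hD0]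
    nlinarith [mul_le_mul_of_nonneg_left hqD hj0]
  -- bound on tail block
  have hP2 : ∏ j ∈ Finset.Ico (k+1) D, |p - 1 - (j:ℝ)| ≤ ((D-k).factorial : ℝ) := by
    have step1 : ∏ j ∈ Finset.Ico (k+1) D, |p - 1 - (j:ℝ)| ≤
        ∏ j ∈ Finset.Ico (k+1) D, ((j:ℝ) - k + 1) := by
      apply Finset.prod_le_prod (fun j _ => abs_nonneg _)
      intro j hj
      rw [Finset.mem_Ico] at hj
      have : (k:ℝ) + 1 ≤ (j:ℝ) := by exact_mod_cast hj.1
      rw [abs_of_nonpos (by linarith)]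
      linarith
    have step2 : ∏ j ∈ Finset.Ico (k+1) D, ((j:ℝ) - k + 1) = ((D-k).factorial : ℝ) := by
      rw [Finset.prod_Ico_eq_prod_range]
      have : ∀ j ∈ Finset.range (D - (k+1)), ((k+1+j:ℕ):ℝ) - k + 1 = (j:ℝ) + 2 := by
        intro j _; push_cast; ring
      rw [Finset.prod_congr rfl this, prod_range_add_two,
        show D - (k+1) + 1 = D - k from by omega]
    exact le_of_le_of_eq step1 step2
  -- factorial split
  have hfact : ((D.factorial:ℝ)) =
      (∏ j ∈ Finset.range (k-1), ((D:ℝ) - j)) * (((D-k+1:ℕ)):ℝ) * (((D-k).factorial):ℝ) := by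
    have h1 : (D - (k-1)).factorial * D.descFactorial (k-1) = D.factorial :=
      Nat.factorial_mul_descFactorial hkm1D
    have h2 : D - (k-1) = (D-k) + 1 := by omega
    have h3 : (D.descFactorial (k-1) : ℝ) = ∏ j ∈ Finset.range (k-1), ((D:ℝ) - j) := by
      rw [Nat.descFactorial_eq_prod_range, Nat.cast_prod]
      apply Finset.prod_congr rfl
      intro j hj
      rw [Finset.mem_range] at hj
      rw [Nat.cast_sub (by omega)]
    rw [← h1, h2, Nat.factorial_succ]
    push_cast [h3]
    ring
  -- positivity facts
  have hA0 : (0:ℝ) < ∏ j ∈ Finset.range (k-1), ((D:ℝ) - j) := by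
    apply Finset.prod_pos
    intro j hj
    rw [Finset.mem_range] at hj
    have : (j:ℝ) < (k:ℝ) - 1 := by
      have : (j+1:ℕ) ≤ k - 1 := by omega
      have := (Nat.cast_le (α := ℝ)).mpr this
      push_cast [Nat.cast_sub hk1] at this
      linarith
    linarith
  have hm1 : ((D-k+1:ℕ):ℝ) = (D:ℝ) - k + 1 := by
    push_cast [Nat.cast_sub (show k ≤ D by omega)]; ring
  have hm1pos : (0:ℝ) < ((D-k+1:ℕ):ℝ) := by rw [hm1]; linarith
  have hmf : (0:ℝ) < (((D-k).factorial):ℝ) := by exact_mod_cast (D-k).factorial_pos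
  -- combine
  have habs : |gchoose (p-1) D| = (∏ j ∈ Finset.range D, |p - 1 - (j:ℝ)|) / (D.factorial : ℝ) := by
    rw [gchoose, abs_div, Finset.abs_prod,
      abs_of_nonneg (by positivity : (0:ℝ) ≤ (D.factorial:ℝ))]
  have hqDr0 : (0:ℝ) ≤ ((p-1)/D)^(k-1) := by positivity
  have hN : ∏ j ∈ Finset.range D, |p - 1 - (j:ℝ)| ≤
      (((p-1)/D)^(k-1) * ∏ j ∈ Finset.range (k-1), ((D:ℝ) - j)) *
        ((p - k) * ((1 - (p - k)) * ((D-k).factorial : ℝ))) := by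
    rw [hsplit]
    apply mul_le_mul hP1
    · apply mul_le_mul_of_nonneg_left _ hθ0
      exact mul_le_mul_of_nonneg_left hP2 hθ1
    · apply mul_nonneg hθ0
      apply mul_nonneg hθ1
      exact Finset.prod_nonneg (fun j _ => abs_nonneg _)
    · exact mul_nonneg hqDr0 hA0.le
  rw [habs, hfact]
  calc (∏ j ∈ Finset.range D, |p - 1 - (j:ℝ)|) /
        ((∏ j ∈ Finset.range (k-1), ((D:ℝ) - j)) * (((D-k+1:ℕ)):ℝ) * (((D-k).factorial):ℝ))
      ≤ ((((p-1)/D)^(k-1) * ∏ j ∈ Finset.range (k-1), ((D:ℝ) - j)) *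
          ((p - k) * ((1 - (p - k)) * ((D-k).factorial : ℝ)))) /
        ((∏ j ∈ Finset.range (k-1), ((D:ℝ) - j)) * (((D-k+1:ℕ)):ℝ) * (((D-k).factorial):ℝ)) := by
        apply (div_le_div_iff_of_pos_right (by positivity)).mpr hN
    _ = ((p-1)/D)^(k-1) * ((p - k) * (1 - (p - k)) / ((D:ℝ) - k + 1)) := by
        rw [← hm1]
        field_simp
end MainBound
section Numeric
open Real

lemma B_lt_eps (p ε : ℝ) (k D : ℕ) (hk1 : 1 ≤ k) (hkp : (k:ℝ) < p) (hpk : p < k+1)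
    (hε0 : 0 < ε)
    (hD1 : k + 1 ≤ D)
    (hDc : p * (Real.pi * ε) ^ (-(1:ℝ)/(k:ℝ)) ≤ D)
    (hD2 : p - 1 + Real.pi/4 ≤ D) :
    |gchoose (p-1) D| < ε := by
  have hk1' : (1:ℝ) ≤ (k:ℝ) := by exact_mod_cast hk1
  have hp0 : (0:ℝ) < p := by linarith
  have hDk : (k:ℝ) + 1 ≤ (D:ℝ) := by exact_mod_cast hD1
  have hD0 : (0:ℝ) < (D:ℝ) := by linarith
  have hπε : 0 < Real.pi * ε := mul_pos Real.pi_pos hε0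
  set y := (Real.pi * ε) ^ ((1:ℝ)/(k:ℝ)) with hy_def
  have hy0 : 0 < y := Real.rpow_pos_of_pos hπε _
  have hneg : (Real.pi * ε) ^ (-(1:ℝ)/(k:ℝ)) = y⁻¹ := by
    rw [neg_div, Real.rpow_neg hπε.le]
  have s1 : p / D ≤ y := by
    rw [hneg] at hDc
    rw [div_le_iff₀ hD0]
    calc p = (p * y⁻¹) * y := by field_simp
      _ ≤ (D:ℝ) * y := mul_le_mul_of_nonneg_right hDc hy0.le
      _ = y * (D:ℝ) := mul_comm _ _
  have hyk : y ^ k = Real.pi * ε := by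
    rw [hy_def, ← Real.rpow_natCast ((Real.pi * ε) ^ ((1:ℝ)/(k:ℝ))) k,
      ← Real.rpow_mul hπε.le]
    rw [show (1:ℝ)/(k:ℝ) * (k:ℕ) = 1 from by field_simp, Real.rpow_one]
  have s2 : (p/D)^k ≤ Real.pi * ε := by
    rw [← hyk]
    exact pow_le_pow_left₀ (by positivity) s1 k
  have hpD0 : 0 < p / D := by positivity
  have s3 : ((p-1)/D)^(k-1) ≤ Real.pi * ε * D / p := by
    have e1 : ((p-1)/D)^(k-1) ≤ (p/D)^(k-1) := by
      apply pow_le_pow_left₀ (div_nonneg (by linarith) hD0.le)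
      exact div_le_div_of_nonneg_right (by linarith) hD0.le
    have e2 : (p/D)^(k-1) * (p/D) = (p/D)^k := by
      rw [← pow_succ, show k - 1 + 1 = k from by omega]
    have e3 : (p/D)^(k-1) = (p/D)^k * (D/p) := by
      rw [← e2]; field_simp
    refine e1.trans ?_
    rw [e3]
    calc (p/D)^k * (D/p) ≤ (Real.pi * ε) * (D/p) := by
          apply mul_le_mul_of_nonneg_right s2 (by positivity)
      _ = Real.pi * ε * D / p := by ring
  have hT : (0:ℝ) < (D:ℝ) - k + 1 := by linarith
  have hθθ : (p - k) * (1 - (p - k)) ≤ 1/4 := by nlinarith [sq_nonneg (2*(p-k) - 1)]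
  have hθθ0 : 0 ≤ (p - k) * (1 - (p - k)) := by
    apply mul_nonneg <;> linarith
  have h4 : Real.pi * D < 4 * p * ((D:ℝ) - k + 1) := by
    nlinarith [Real.pi_lt_d2, Real.pi_gt_d6, sq_nonneg (p - 1)]
  have hmain := main_bound_prod hk1 hkp hpk hD1
  have step : |gchoose (p-1) D| ≤ (Real.pi * ε * D / p) * ((1/4) / ((D:ℝ) - k + 1)) := by
    refine hmain.trans ?_
    apply mul_le_mul s3 _ _ (by positivity)
    · exact div_le_div_of_nonneg_right hθθ hT.le
    · positivity
  refine step.trans_lt ?_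
  have key : (Real.pi * ε * D / p) * ((1/4) / ((D:ℝ) - k + 1))
      = (Real.pi * D / (4 * p * ((D:ℝ) - k + 1))) * ε := by
    field_simp
  rw [key]
  calc (Real.pi * D / (4 * p * ((D:ℝ) - k + 1))) * ε < 1 * ε := by
        apply mul_lt_mul_of_pos_right _ hε0
        rw [div_lt_one (by positivity)]
        exact h4
    _ = ε := one_mul ε

lemma D_facts (p ε : ℝ) (k : ℕ) (hk1 : 1 ≤ k) (hkp : (k:ℝ) < p) (hpk : p < k+1)
    (hε0 : 0 < ε) (hε1 : ε < 1) :
    k + 1 ≤ ⌈p * (Real.pi * ε) ^ (-(1:ℝ)/(k:ℝ))⌉₊ + 2 ∧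
      p - 1 + Real.pi/4 ≤ ((⌈p * (Real.pi * ε) ^ (-(1:ℝ)/(k:ℝ))⌉₊ + 2 : ℕ) : ℝ) := by
  have hk1' : (1:ℝ) ≤ (k:ℝ) := by exact_mod_cast hk1
  have hp0 : (0:ℝ) < p := by linarith
  have hπε : 0 < Real.pi * ε := mul_pos Real.pi_pos hε0
  set c := (Real.pi * ε) ^ (-(1:ℝ)/(k:ℝ)) with hc_def
  have hc0 : 0 < c := Real.rpow_pos_of_pos hπε _
  set L := Real.log Real.pi with hL_def
  have hL0 : 0 ≤ L := Real.log_nonneg (by nlinarith [Real.pi_gt_d6])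
  have hL : L < 1.3863 := by
    have h1 : Real.log Real.pi < Real.log 4 := by
      apply Real.log_lt_log Real.pi_pos
      nlinarith [Real.pi_lt_d2]
    have h2 : Real.log 4 = 2 * Real.log 2 := by
      rw [show (4:ℝ) = 2^2 from by norm_num, Real.log_pow]
      push_cast; ring
    calc L < 2 * Real.log 2 := h2 ▸ h1
      _ < 1.3863 := by nlinarith [Real.log_two_lt_d9]
  have hπc : Real.pi ^ (-(1:ℝ)/(k:ℝ)) ≤ c := by
    apply Real.rpow_le_rpow_of_nonpos hπε
    · nlinarith [mul_pos Real.pi_pos (show (0:ℝ) < 1 - ε by linarith)]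
    · rw [neg_div]
      simp only [neg_nonpos]
      positivity
  have hexp : 1 - L/k ≤ Real.pi ^ (-(1:ℝ)/(k:ℝ)) := by
    rw [Real.rpow_def_of_pos Real.pi_pos]
    have := Real.add_one_le_exp (L * (-(1:ℝ)/(k:ℝ)))
    have e : L * (-(1:ℝ)/(k:ℝ)) = -(L/k) := by ring
    rw [e] at this
    calc 1 - L/k = -(L/k) + 1 := by ring
      _ ≤ Real.exp (-(L/k)) := this
      _ = Real.exp (Real.log Real.pi * (-(1:ℝ)/(k:ℝ))) := by rw [← hL_def, ← e]
  have hc_low : 1 - L/k ≤ c := hexp.trans hπc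
  have hceil : p * c ≤ (⌈p * c⌉₊ : ℝ) := Nat.le_ceil _
  have hπlt : Real.pi < 3.15 := Real.pi_lt_d2
  constructor
  · -- k + 1 ≤ ⌈p*c⌉ + 2
    rcases Nat.lt_or_ge k 2 with hk2 | hk2
    · -- k = 1
      have : 1 ≤ ⌈p * c⌉₊ := Nat.one_le_iff_ne_zero.mpr (by
        intro h
        have := Nat.ceil_pos.mpr (mul_pos hp0 hc0)
        omega)
      omega
    · -- k ≥ 2
      have hk2' : (2:ℝ) ≤ (k:ℝ) := by exact_mod_cast hk2
      have hLk : 0 < 1 - L/k := by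
        have : L/k ≤ L/2 := by
          apply div_le_div_of_nonneg_left hL0 (by norm_num) hk2'
        nlinarith
      have hpc : (k:ℝ) - L < p * c := by
        calc (k:ℝ) - L = (k:ℝ) * (1 - L/k) := by field_simp
          _ < p * (1 - L/k) := by
              apply mul_lt_mul_of_pos_right hkp hLk
          _ ≤ p * c := mul_le_mul_of_nonneg_left hc_low hp0.le
      have : (k:ℝ) - 2 < (⌈p * c⌉₊ : ℝ) := by
        calc (k:ℝ) - 2 ≤ (k:ℝ) - 1.3863 := by linarith
          _ < (k:ℝ) - L := by linarith
          _ < p * c := hpc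
          _ ≤ _ := hceil
      have h2' : ((k - 2 : ℕ):ℝ) < (⌈p * c⌉₊ : ℝ) := by
        rw [Nat.cast_sub hk2]; push_cast; linarith
      have h2 : k - 2 < ⌈p * c⌉₊ := by exact_mod_cast h2'
      omega
  · -- p - 1 + π/4 ≤ ⌈p*c⌉ + 2
    rcases Nat.lt_or_ge k 2 with hk2 | hk2
    · -- k = 1 : p < 2
      have hk1eq : k = 1 := by omega
      have hp2 : p < 2 := by
        rw [hk1eq] at hpk; push_cast at hpk; linarith
      have : 1 ≤ ⌈p * c⌉₊ := by
        apply Nat.ceil_pos.mpr (mul_pos hp0 hc0)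
      have h3 : (3:ℝ) ≤ ((⌈p * c⌉₊ + 2 : ℕ):ℝ) := by
        push_cast
        have : (1:ℝ) ≤ (⌈p * c⌉₊ : ℝ) := by exact_mod_cast this
        linarith
      nlinarith
    · -- k ≥ 2
      have hk2' : (2:ℝ) ≤ (k:ℝ) := by exact_mod_cast hk2
      have hcast : ((⌈p * c⌉₊ + 2 : ℕ):ℝ) = (⌈p * c⌉₊ : ℝ) + 2 := by push_cast; ring
      rw [hcast]
      have hpc2 : p - p * (L/(k:ℝ)) ≤ p * c := by
        calc p - p * (L/(k:ℝ)) = p * (1 - L/(k:ℝ)) := by ring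
          _ ≤ p * c := mul_le_mul_of_nonneg_left hc_low hp0.le
      have hpk2 : p ≤ (3/2) * (k:ℝ) := by linarith
      have h5 : p * (L/(k:ℝ)) ≤ (3/2) * L := by
        rw [mul_div_assoc']
        rw [div_le_iff₀ (by linarith : (0:ℝ) < (k:ℝ))]
        nlinarith [mul_le_mul_of_nonneg_right hpk2 hL0]
      linarith
end Numeric
section Taylor
open Set

lemma taylor_remainder (p : ℝ) (hp1 : 1 < p) (x : ℝ) (hx0 : 0 < x) (hx1 : x < 1) (n : ℕ) :
    |x ^ p - ∑ i ∈ Finset.range (n+1), gchoose p i * (x-1)^i| ≤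
      (∏ i ∈ Finset.range (n+1), |p - (i:ℝ)|) / (n.factorial : ℝ) := by
  set X := 2 - x with hX_def
  have hX : 1 < X := by simp [hX_def]; linarith
  set s := Set.Icc (1:ℝ) X with hs_def
  have hs : UniqueDiffOn ℝ s := uniqueDiffOn_Icc hX
  set g : ℝ → ℝ := fun y => (2 - y) ^ p with hg_def
  set F : ℕ → ℝ → ℝ :=
    fun m y => (∏ i ∈ Finset.range m, (p - (i:ℝ))) * (-1:ℝ)^m * (2-y) ^ (p - (m:ℝ)) with hF_def
  have hmem2 : ∀ y ∈ s, 0 < 2 - y := by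
    intro y hy
    rw [hs_def, Set.mem_Icc] at hy
    have := hy.2
    rw [hX_def] at this
    linarith
  have hderiv : ∀ (m:ℕ) (y:ℝ), 0 < 2 - y → HasDerivAt (F m) (F (m+1) y) y := by
    intro m y hy
    have h1 : HasDerivAt (fun y:ℝ => 2 - y) (-1) y := by
      simpa using (hasDerivAt_id y).const_sub 2
    have h2 : HasDerivAt (fun z:ℝ => z ^ (p - (m:ℝ)))
        ((p - (m:ℝ)) * (2-y) ^ (p - (m:ℝ) - 1)) (2-y) :=
      Real.hasDerivAt_rpow_const (Or.inl (ne_of_gt hy))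
    have h3 : HasDerivAt (fun y:ℝ => (2-y) ^ (p - (m:ℝ)))
        ((p - (m:ℝ)) * (2-y) ^ (p - (m:ℝ) - 1) * (-1)) y := h2.comp y h1
    have h4 := h3.const_mul ((∏ i ∈ Finset.range m, (p - (i:ℝ))) * (-1:ℝ)^m)
    refine h4.congr_deriv ?_
    rw [hF_def]
    simp only []
    rw [Finset.prod_range_succ]
    push_cast
    rw [show p - ((m:ℝ)+1) = p - (m:ℝ) - 1 from by ring]
    ring
  have hiter : ∀ m:ℕ, ∀ y ∈ s, iteratedDerivWithin m g s y = F m y := by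
    intro m
    induction m with
    | zero =>
      intro y hy
      simp [iteratedDerivWithin_zero, hF_def, hg_def]
    | succ m ih =>
      intro y hy
      rw [iteratedDerivWithin_succ]
      rw [derivWithin_congr (fun z hz => ih z hz) (ih y hy)]
      exact ((hderiv m y (hmem2 y hy)).hasDerivWithinAt).derivWithin (hs y hy)
  have hcont : ∀ m:ℕ, ContDiffOn ℝ m g s := by
    intro m y hy
    apply ContDiffAt.contDiffWithinAt
    have h1 : ContDiffAt ℝ m (fun y:ℝ => 2 - y) y := (contDiff_const.sub contDiff_id).contDiffAt
    exact (Real.contDiffAt_rpow_const_of_ne (ne_of_gt (hmem2 y hy))).comp y h1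
  have hdiff : DifferentiableOn ℝ (iteratedDerivWithin n g s) (Set.Ioo 1 X) := by
    apply DifferentiableOn.congr (f := F n)
    · intro y hy
      exact ((hderiv n y (hmem2 y (Ioo_subset_Icc_self hy))).differentiableAt).differentiableWithinAt
    · intro y hy
      exact hiter n y (Ioo_subset_Icc_self hy)
  obtain ⟨x', hx', heq⟩ := taylor_mean_remainder_cauchy (f := g) (n := n) (ne_of_lt hX)
    (by rw [Set.uIcc_of_le hX.le]; exact hcont n)
    (by rw [Set.uIcc_of_le hX.le, Set.uIoo_of_le hX.le]; exact hdiff)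
  rw [Set.uIoo_of_le hX.le] at hx'
  rw [Set.uIcc_of_le hX.le, ← hs_def] at heq
  have hx's : x' ∈ s := Ioo_subset_Icc_self hx'
  have hgX : g X = x ^ p := by rw [hg_def]; norm_num [hX_def]
  have h1s : (1:ℝ) ∈ s := by
    rw [hs_def, Set.mem_Icc]; constructor <;> linarith
  have htay : taylorWithinEval g n s 1 X = ∑ i ∈ Finset.range (n+1), gchoose p i * (x-1)^i := by
    rw [taylor_within_apply]
    apply Finset.sum_congr rfl
    intro i _
    rw [smul_eq_mul, hiter i 1 h1s, hF_def]
    simp only []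
    rw [show (2:ℝ) - 1 = 1 from by norm_num, Real.one_rpow]
    rw [gchoose]
    have hfac : ((i.factorial:ℝ)) ≠ 0 := by exact_mod_cast i.factorial_ne_zero
    have hpow : (x - 1)^i = (-1:ℝ)^i * (X - 1)^i := by
      rw [← mul_pow]
      congr 1
      rw [hX_def]; ring
    rw [hpow]
    field_simp
  rw [← hgX, ← htay, heq, hiter (n+1) x' hx's]
  -- now bound the remainder
  set u := 2 - x' with hu_def
  have hu0 : 0 < u := by rw [hu_def]; rcases hx' with ⟨h1, h2⟩; rw [hX_def] at h2; linarith
  have hu1 : u < 1 := by rw [hu_def]; rcases hx' with ⟨h1, _⟩; linarith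
  have hxu : x < u := by rw [hu_def]; rcases hx' with ⟨_, h2⟩; rw [hX_def] at h2; linarith
  have hXx' : X - x' = u - x := by rw [hu_def, hX_def]; ring
  have hX1 : X - 1 = 1 - x := by rw [hX_def]; ring
  have hFabs : |F (n+1) x'| =
      (∏ i ∈ Finset.range (n+1), |p - (i:ℝ)|) * u ^ (p - ((n+1:ℕ):ℝ)) := by
    rw [hF_def]
    simp only []
    rw [abs_mul, abs_mul, Finset.abs_prod, abs_pow, abs_neg, abs_one, one_pow, mul_one,
      abs_of_pos (Real.rpow_pos_of_pos hu0 _)]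
  rw [abs_mul, abs_div, abs_mul, abs_pow]
  rw [hFabs, hXx', hX1, abs_of_nonneg (by linarith : (0:ℝ) ≤ u - x),
    abs_of_nonneg (by linarith : (0:ℝ) ≤ 1 - x),
    abs_of_nonneg (by positivity : (0:ℝ) ≤ (n.factorial:ℝ))]
  set A := ∏ i ∈ Finset.range (n+1), |p - (i:ℝ)| with hA_def
  have hA0 : 0 ≤ A := Finset.prod_nonneg (fun i _ => abs_nonneg _)
  have hkey : u ^ (p - ((n+1:ℕ):ℝ)) * (u-x)^n * (1-x) ≤ 1 := by
    have e : u ^ (p - ((n+1:ℕ):ℝ)) = u ^ (p-1) / u^n := by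
      rw [show p - ((n+1:ℕ):ℝ) = (p-1) - ((n:ℕ):ℝ) from by push_cast; ring,
        Real.rpow_sub hu0, Real.rpow_natCast]
    rw [e]
    have e2 : u ^ (p-1) / u^n * (u-x)^n = u ^ (p-1) * ((u-x)/u)^n := by
      rw [div_pow]; ring
    rw [e2]
    have h1 : u ^ (p-1) ≤ 1 := Real.rpow_le_one hu0.le hu1.le (by linarith)
    have h2 : ((u-x)/u)^n ≤ 1 := by
      apply pow_le_one₀ (div_nonneg (by linarith) hu0.le)
      rw [div_le_one hu0]
      linarith
    have h12 : u ^ (p-1) * ((u-x)/u)^n ≤ 1 :=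
      mul_le_one₀ h1 (pow_nonneg (div_nonneg (by linarith) hu0.le) n) h2
    exact mul_le_one₀ h12 (by linarith) (by linarith)
  calc A * u ^ (p - ((n+1:ℕ):ℝ)) * (u-x)^n / (n.factorial:ℝ) * (1-x)
      = (A / (n.factorial:ℝ)) * (u ^ (p - ((n+1:ℕ):ℝ)) * (u-x)^n * (1-x)) := by ring
    _ ≤ (A / (n.factorial:ℝ)) * 1 := by
        apply mul_le_mul_of_nonneg_left hkey (by positivity)
    _ = A / (n.factorial:ℝ) := mul_one _
end Taylor
theorem binomial_series_approximation'
    (p ε : ℝ) (hp1 : 1 < p) (hpn : ¬ ∃ n : ℕ, p = (n : ℝ)) (hε0 : 0 < ε) (hε1 : ε < 1) :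
    ∀ x : ℝ, 0 ≤ x → x ≤ 1 →
      |(∑ i ∈ Finset.range ((⌈p * (Real.pi * ε) ^ (-(1 : ℝ) / (⌊p⌋₊ : ℝ))⌉₊ + 2) + 1),
          gchoose p i * (x - 1) ^ i) - x ^ p| < ε := by
  have hp0 : 0 < p := by linarith
  set k := ⌊p⌋₊ with hk_def
  have hk1 : 1 ≤ k := Nat.le_floor (by exact_mod_cast hp1.le)
  have hkp : (k:ℝ) < p := by
    rcases lt_or_eq_of_le (Nat.floor_le hp0.le) with h | h
    · exact h
    · exact absurd ⟨k, h.symm⟩ hpn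
  have hpk : p < (k:ℝ) + 1 := by
    have := Nat.lt_floor_add_one p
    exact_mod_cast this
  set D := ⌈p * (Real.pi * ε) ^ (-(1 : ℝ) / (k : ℝ))⌉₊ + 2 with hD_def
  obtain ⟨hD1, hD2⟩ := D_facts p ε k hk1 hkp hpk hε0 hε1
  have hDc : p * (Real.pi * ε) ^ (-(1 : ℝ) / (k : ℝ)) ≤ (D:ℝ) := by
    calc p * (Real.pi * ε) ^ (-(1 : ℝ) / (k : ℝ))
        ≤ (⌈p * (Real.pi * ε) ^ (-(1 : ℝ) / (k : ℝ))⌉₊ : ℝ) := Nat.le_ceil _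
      _ ≤ (D:ℝ) := by rw [hD_def]; push_cast; linarith
  have hBD : |gchoose (p-1) D| < ε := B_lt_eps p ε k D hk1 hkp hpk hε0 hD1 hDc hD2
  have hDk : k ≤ D := by omega
  have hk1' : (1:ℝ) ≤ (k:ℝ) := by exact_mod_cast hk1
  intro x hx0 hx1
  rcases eq_or_lt_of_le hx1 with hxeq | hxlt
  · -- x = 1
    subst hxeq
    have hsum : ∑ i ∈ Finset.range (D+1), gchoose p i * ((1:ℝ)-1)^i = 1 := by
      rw [show (1:ℝ)-1 = 0 from by ring, Finset.sum_eq_single 0]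
      · simp [gchoose]
      · intro i _ hi; simp [zero_pow hi]
      · intro h; exact absurd (Finset.mem_range.mpr (by omega)) h
    rw [hsum, Real.one_rpow]
    simpa using hε0
  rcases eq_or_lt_of_le hx0 with hxeq0 | hxpos
  · -- x = 0
    have hx : x = 0 := hxeq0.symm
    subst hx
    have hsum : ∑ i ∈ Finset.range (D+1), gchoose p i * ((0:ℝ)-1)^i
        = (-1:ℝ)^D * gchoose (p-1) D := by
      rw [← alt_sum p D]
      apply Finset.sum_congr rfl
      intro i _
      norm_num
    rw [hsum, Real.zero_rpow (ne_of_gt hp0), sub_zero, abs_mul, abs_pow, abs_neg, abs_one,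
      one_pow, one_mul]
    exact hBD
  -- 0 < x < 1
  have key : ∀ n : ℕ, D ≤ n →
      |(∑ i ∈ Finset.range (D+1), gchoose p i * (x-1)^i) - x ^ p|
        ≤ p^(k+1) / n + |gchoose (p-1) D| := by
    intro n hn
    have hkn : k ≤ n := le_trans hDk hn
    have hn0 : (0:ℝ) < (n:ℝ) := by
      have : 1 ≤ n := le_trans hk1 hkn
      exact_mod_cast Nat.lt_of_lt_of_le Nat.zero_lt_one this
    -- remainder for degree n
    have hrem := taylor_remainder p hp1 x hxpos hxlt n
    have habs1 : (∏ i ∈ Finset.range (n+1), |p - (i:ℝ)|) / (n.factorial : ℝ)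
        = p * |gchoose (p-1) n| := by
      have h1 : |gchoose p (n+1)| =
          (∏ i ∈ Finset.range (n+1), |p - (i:ℝ)|) / ((n+1).factorial : ℝ) := by
        rw [gchoose, abs_div, Finset.abs_prod,
          abs_of_nonneg (by positivity : (0:ℝ) ≤ ((n+1).factorial:ℝ))]
      have h2 : ((n:ℝ)+1) * |gchoose p (n+1)| = p * |gchoose (p-1) n| := by
        rw [← abs_of_pos (show (0:ℝ) < (n:ℝ)+1 by positivity), ← abs_mul, mul_gchoose,
          abs_mul, abs_of_pos hp0]
      rw [← h2, h1, Nat.factorial_succ]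
      push_cast
      have : ((n.factorial:ℝ)) ≠ 0 := by exact_mod_cast n.factorial_ne_zero
      field_simp
    rw [habs1] at hrem
    have hBn : p * |gchoose (p-1) n| ≤ p^(k+1) / n := by
      have := B_tendsto_bound hk1 hkp hpk n hkn
      calc p * |gchoose (p-1) n| ≤ p * (p^k / n) := mul_le_mul_of_nonneg_left this hp0.le
        _ = p^(k+1) / n := by rw [pow_succ]; ring
    -- tail between D+1 and n+1
    have hsplit : ∑ i ∈ Finset.range (n+1), gchoose p i * (x-1)^i
        = (∑ i ∈ Finset.range (D+1), gchoose p i * (x-1)^i)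
          + ∑ i ∈ Finset.Ico (D+1) (n+1), gchoose p i * (x-1)^i := by
      rw [Finset.sum_range_add_sum_Ico _ (by omega)]
    have htail : |∑ i ∈ Finset.Ico (D+1) (n+1), gchoose p i * (x-1)^i|
        ≤ |gchoose (p-1) D| := by
      calc |∑ i ∈ Finset.Ico (D+1) (n+1), gchoose p i * (x-1)^i|
          ≤ ∑ i ∈ Finset.Ico (D+1) (n+1), |gchoose p i * (x-1)^i| :=
            Finset.abs_sum_le_sum_abs _ _
        _ ≤ ∑ i ∈ Finset.Ico (D+1) (n+1), |gchoose p i| := by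
            apply Finset.sum_le_sum
            intro i _
            rw [abs_mul]
            have : |(x-1)^i| ≤ 1 := by
              rw [abs_pow]
              apply pow_le_one₀ (abs_nonneg _)
              rw [abs_of_nonpos (by linarith)]
              linarith
            calc |gchoose p i| * |(x-1)^i| ≤ |gchoose p i| * 1 :=
                  mul_le_mul_of_nonneg_left this (abs_nonneg _)
              _ = |gchoose p i| := mul_one _
        _ = |gchoose (p-1) D| - |gchoose (p-1) n| := telescope hk1 hkp hpk D hDk n hn
        _ ≤ |gchoose (p-1) D| := by
            have := abs_nonneg (gchoose (p-1) n); linarith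
    calc |(∑ i ∈ Finset.range (D+1), gchoose p i * (x-1)^i) - x ^ p|
        = |(x ^ p - ∑ i ∈ Finset.range (n+1), gchoose p i * (x-1)^i)
            + ∑ i ∈ Finset.Ico (D+1) (n+1), gchoose p i * (x-1)^i| := by
          rw [hsplit]
          rw [abs_sub_comm]
          congr 1
          ring
      _ ≤ |x ^ p - ∑ i ∈ Finset.range (n+1), gchoose p i * (x-1)^i|
            + |∑ i ∈ Finset.Ico (D+1) (n+1), gchoose p i * (x-1)^i| := abs_add_le _ _
      _ ≤ p^(k+1) / n + |gchoose (p-1) D| := add_le_add (hrem.trans hBn) htail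
  have hlim : Filter.Tendsto (fun n : ℕ => p^(k+1) / n + |gchoose (p-1) D|)
      Filter.atTop (nhds (0 + |gchoose (p-1) D|)) :=
    (tendsto_const_div_atTop_nhds_zero_nat (p^(k+1))).add_const _
  rw [zero_add] at hlim
  have hle : |(∑ i ∈ Finset.range (D+1), gchoose p i * (x-1)^i) - x ^ p|
      ≤ |gchoose (p-1) D| := by
    apply ge_of_tendsto hlim
    filter_upwards [Filter.eventually_ge_atTop D] with n hn
    exact key n hn
  exact lt_of_le_of_lt hle hBD

/-- **Polynomial approximation of `x ^ p` via a truncated binomial series**. -/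
theorem binomial_series_approximation
    (p ε : ℝ) (hp1 : 1 < p) (hpn : ¬ ∃ n : ℕ, p = (n : ℝ)) (hε0 : 0 < ε) (hε1 : ε < 1) :
    ∀ x : ℝ, 0 ≤ x → x ≤ 1 →
      |(∑ i ∈ Finset.range ((⌈p * (Real.pi * ε) ^ (-(1 : ℝ) / (⌊p⌋₊ : ℝ))⌉₊ + 2) + 1),
          gchoose p i * (x - 1) ^ i) - x ^ p| < ε :=
  binomial_series_approximation' p ε hp1 hpn hε0 hε1

end
end

section
/- Let D be a natural number and let p be a real number with 1 < p < D and p not a natural number. Then |C(p, D+1)| ≤ |C(p−1, D)| ≤ (1/π)·(p/D)^{⌊p⌋}, where C(s, m) = s(s−1)⋯(s−m+1)/m! denotes the generalized binomial coefficient. -/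
open scoped ENNReal BigOperators

noncomputable section

lemma aux_pow (D : ℕ) : ∀ k : ℕ, k ≤ D →
    ((D:ℝ)+1-(k:ℝ))*((D:ℝ)+1)^k ≤ (D:ℝ)^k*((D:ℝ)+1) := by
  intro k
  induction k with
  | zero => simp
  | succ k ih =>
      intro hk
      have hk' : k ≤ D := Nat.le_of_succ_le hk
      have ihk := ih hk'
      have hD : (0:ℝ) ≤ (D:ℝ) := Nat.cast_nonneg D
      have hknn : (0:ℝ) ≤ (k:ℝ) := Nat.cast_nonneg k
      have h1 : ((D:ℝ)-(k:ℝ))*((D:ℝ)+1) ≤ (D:ℝ)*((D:ℝ)+1-(k:ℝ)) := by nlinarith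
      calc ((D:ℝ)+1-((k:ℕ)+1:ℕ))*((D:ℝ)+1)^(k+1)
          = (((D:ℝ)-(k:ℝ))*((D:ℝ)+1))*((D:ℝ)+1)^k := by push_cast; ring
        _ ≤ ((D:ℝ)*(((D:ℝ)+1-(k:ℝ))))*((D:ℝ)+1)^k := by
            apply mul_le_mul_of_nonneg_right h1 (by positivity)
        _ = (D:ℝ)*(((D:ℝ)+1-(k:ℝ))*((D:ℝ)+1)^k) := by ring
        _ ≤ (D:ℝ)*((D:ℝ)^k*((D:ℝ)+1)) := mul_le_mul_of_nonneg_left ihk hD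
        _ = (D:ℝ)^(k+1)*((D:ℝ)+1) := by ring

lemma factprod : ∀ j : ℕ, ∏ i ∈ Finset.range j, ((j:ℝ)+1-(i:ℝ)) = ((j+1).factorial : ℝ) := by
  intro j
  induction j with
  | zero => simp
  | succ j ih =>
      rw [Finset.prod_range_succ']
      push_cast
      have h : ∏ i ∈ Finset.range j, ((j:ℝ)+1+1-((i:ℝ)+1)) = ∏ i ∈ Finset.range j, ((j:ℝ)+1-(i:ℝ)) :=
        Finset.prod_congr rfl fun i _ => by ring
      rw [h, ih]
      push_cast [Nat.factorial_succ]
      ring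

lemma key_lemma (p : ℝ) (k : ℕ) (hk1 : 1 ≤ k) (hkp : (k:ℝ) < p) (hpk : p < (k:ℝ)+1) :
    ∀ E : ℕ, k+1 ≤ E →
    (∏ i ∈ Finset.range E, |p - 1 - (i:ℝ)|) / (E.factorial : ℝ) ≤ (1/Real.pi) * (p/(E:ℝ))^k := by
  have hπ : (0:ℝ) < Real.pi := Real.pi_pos
  have hπ4 : Real.pi ≤ 4 := Real.pi_le_four
  obtain ⟨j, rfl⟩ : ∃ j, k = j + 1 := ⟨k-1, (Nat.succ_pred_eq_of_pos hk1).symm⟩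
  intro E hE
  induction E, hE using Nat.le_induction with
  | base =>
      have hjp : ((j:ℝ)+1) < p := by push_cast at hkp ⊢; linarith
      have hpj : p < (j:ℝ)+2 := by push_cast at hpk ⊢; linarith
      rw [Finset.prod_range_succ, Finset.prod_range_succ]
      have e1 : |p - 1 - ((j:ℕ):ℝ)| = p - ((j:ℝ)+1) := by
        rw [abs_of_pos]; · ring
        · linarith
      have e2 : |p - 1 - ((j+1:ℕ):ℝ)| = ((j:ℝ)+2) - p := by
        rw [abs_of_neg]; · push_cast; ring
        · push_cast; linarith
      have hbd : ∏ i ∈ Finset.range j, |p - 1 - (i:ℝ)| ≤ ((j+1).factorial : ℝ) := by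
        rw [← factprod j]
        apply Finset.prod_le_prod (fun i _ => abs_nonneg _)
        intro i hi
        have hij : (i:ℝ) ≤ (j:ℝ) - 1 := by
          have h' := Finset.mem_range.mp hi
          have : (i:ℝ) + 1 ≤ (j:ℝ) := by exact_mod_cast h'
          linarith
        rw [abs_of_pos (by linarith)]
        linarith
      have hquarter : (p - ((j:ℝ)+1)) * (((j:ℝ)+2) - p) ≤ 1/4 := by
        nlinarith [sq_nonneg (2*p - 2*(j:ℝ) - 3)]
      have hfac : (((j+1)+1).factorial : ℝ) = ((j:ℝ)+2) * ((j+1).factorial : ℝ) := by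
        rw [Nat.factorial_succ]; push_cast; ring
      have hfacpos : (0:ℝ) < ((j+1).factorial : ℝ) := by positivity
      have hEpos : (0:ℝ) < (j:ℝ)+2 := by positivity
      rw [e1, e2, hfac]
      have step1 : (∏ i ∈ Finset.range j, |p - 1 - (i:ℝ)|) * (p - ((j:ℝ)+1)) * (((j:ℝ)+2) - p)
          ≤ ((j+1).factorial : ℝ) * (1/4) := by
        have h1 : (0:ℝ) ≤ (p - ((j:ℝ)+1)) * (((j:ℝ)+2) - p) := by nlinarith
        calc (∏ i ∈ Finset.range j, |p - 1 - (i:ℝ)|) * (p - ((j:ℝ)+1)) * (((j:ℝ)+2) - p)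
            = (∏ i ∈ Finset.range j, |p - 1 - (i:ℝ)|) * ((p - ((j:ℝ)+1)) * (((j:ℝ)+2) - p)) := by ring
          _ ≤ ((j+1).factorial : ℝ) * ((p - ((j:ℝ)+1)) * (((j:ℝ)+2) - p)) :=
              mul_le_mul_of_nonneg_right hbd h1
          _ ≤ ((j+1).factorial : ℝ) * (1/4) := mul_le_mul_of_nonneg_left hquarter hfacpos.le
      have hfinal : ((j+1).factorial : ℝ) * (1/4) / (((j:ℝ)+2) * ((j+1).factorial : ℝ))
          ≤ (1/Real.pi) * (p/((j:ℝ)+2))^(j+1) := by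
        have hlhs : ((j+1).factorial : ℝ) * (1/4) / (((j:ℝ)+2) * ((j+1).factorial : ℝ))
            = 1 / (4*((j:ℝ)+2)) := by field_simp
        have hrhs : (1/Real.pi) * (p/((j:ℝ)+2))^(j+1)
            = p^(j+1) / (Real.pi * ((j:ℝ)+2)^(j+1)) := by
          rw [div_pow, div_mul_div_comm, one_mul]
        rw [hlhs, hrhs, div_le_div_iff₀ (by positivity) (by positivity)]
        have haux := aux_pow (j+1) (j+1) le_rfl
        push_cast at haux
        rw [show ((j:ℝ)+1+1) = (j:ℝ)+2 by ring] at haux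
        rw [show ((j:ℝ)+2-((j:ℝ)+1)) = 1 by ring, one_mul] at haux
        have haux' : ((j:ℝ)+2)^(j+1) ≤ ((j:ℝ)+1)^(j+1) * ((j:ℝ)+2) := haux
        have hp_pow : ((j:ℝ)+1)^(j+1) ≤ p^(j+1) :=
          pow_le_pow_left₀ (by positivity) hjp.le _
        have hpowpos : (0:ℝ) < ((j:ℝ)+2)^(j+1) := by positivity
        -- goal: 1 * (π * (j+2)^(j+1)) ≤ p^(j+1) * (4*(j+2))
        nlinarith [mul_le_mul_of_nonneg_right hp_pow hEpos.le,
          mul_le_mul_of_nonneg_right haux' (le_of_lt (show (0:ℝ) < 1 by norm_num))]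
      calc (∏ i ∈ Finset.range j, |p - 1 - (i:ℝ)|) * (p - ((j:ℝ)+1)) * (((j:ℝ)+2) - p)
            / (((j:ℝ)+2) * ((j+1).factorial : ℝ))
          ≤ ((j+1).factorial : ℝ) * (1/4) / (((j:ℝ)+2) * ((j+1).factorial : ℝ)) := by
            gcongr
        _ ≤ (1/Real.pi) * (p/((j:ℝ)+2))^(j+1) := hfinal
        _ = (1/Real.pi) * (p/(((j+1+1:ℕ)):ℝ))^(j+1) := by push_cast; ring
  | succ E hE ih =>
      have hjE : ((j:ℝ)+2) ≤ (E:ℝ) := by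
        have h' : ((j+1+1:ℕ):ℝ) ≤ (E:ℝ) := Nat.cast_le.mpr hE
        push_cast at h'; linarith
      have hEpos : (0:ℝ) < (E:ℝ) := by linarith
      have hE1pos : (0:ℝ) < (E:ℝ)+1 := by linarith
      have hpE : p < (E:ℝ) := by push_cast at hpk; linarith
      rw [Finset.prod_range_succ]
      have eE : |p - 1 - ((E:ℕ):ℝ)| = ((E:ℝ)+1) - p := by
        rw [abs_of_neg (by linarith : p - 1 - (E:ℝ) < 0)]; ring
      rw [eE]
      have hfacE : (((E:ℕ)+1).factorial : ℝ) = ((E:ℝ)+1) * (E.factorial : ℝ) := by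
        rw [Nat.factorial_succ]; push_cast; ring
      rw [hfacE]
      have hprodnn : (0:ℝ) ≤ ∏ i ∈ Finset.range E, |p - 1 - (i:ℝ)| :=
        Finset.prod_nonneg fun i _ => abs_nonneg _
      have hq : (0:ℝ) ≤ ((E:ℝ)+1-p)/((E:ℝ)+1) := by
        apply div_nonneg <;> linarith
      have key1 : (∏ i ∈ Finset.range E, |p - 1 - (i:ℝ)|) * (((E:ℝ)+1) - p)
          / (((E:ℝ)+1) * (E.factorial : ℝ))
          = ((∏ i ∈ Finset.range E, |p - 1 - (i:ℝ)|) / (E.factorial : ℝ))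
            * (((E:ℝ)+1-p)/((E:ℝ)+1)) := by
        rw [mul_comm ((E:ℝ)+1) (E.factorial:ℝ), mul_div_mul_comm]
      rw [key1]
      have step2 : ((∏ i ∈ Finset.range E, |p - 1 - (i:ℝ)|) / (E.factorial : ℝ))
            * (((E:ℝ)+1-p)/((E:ℝ)+1))
          ≤ ((1/Real.pi) * (p/(E:ℝ))^(j+1)) * (((E:ℝ)+1-p)/((E:ℝ)+1)) :=
        mul_le_mul_of_nonneg_right ih hq
      have step3 : ((1/Real.pi) * (p/(E:ℝ))^(j+1)) * (((E:ℝ)+1-p)/((E:ℝ)+1))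
          ≤ (1/Real.pi) * (p/((E:ℝ)+1))^(j+1) := by
        have hcross : (p/(E:ℝ))^(j+1) * (((E:ℝ)+1-p)/((E:ℝ)+1)) ≤ (p/((E:ℝ)+1))^(j+1) := by
          rw [div_pow, div_pow, div_mul_div_comm,
            div_le_div_iff₀ (mul_pos (pow_pos hEpos _) hE1pos) (pow_pos hE1pos _)]
          have haux := aux_pow E (j+1) (by omega)
          have hsub : ((E:ℝ)+1-p)*((E:ℝ)+1)^(j+1) ≤ ((E:ℝ)+1-((j:ℝ)+1))*((E:ℝ)+1)^(j+1) := by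
            apply mul_le_mul_of_nonneg_right _ (by positivity)
            push_cast at hkp; linarith
          have haux2 : ((E:ℝ)+1-p)*((E:ℝ)+1)^(j+1) ≤ (E:ℝ)^(j+1)*((E:ℝ)+1) := by
            push_cast at haux; push_cast at hsub; linarith
          have hp0 : (0:ℝ) < p := lt_of_le_of_lt (Nat.cast_nonneg _) hkp
          have hppos : (0:ℝ) ≤ p^(j+1) := pow_nonneg hp0.le _
          calc p^(j+1)*((E:ℝ)+1-p) * ((E:ℝ)+1)^(j+1)
              = p^(j+1) * (((E:ℝ)+1-p)*((E:ℝ)+1)^(j+1)) := by ring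
            _ ≤ p^(j+1) * ((E:ℝ)^(j+1)*((E:ℝ)+1)) := mul_le_mul_of_nonneg_left haux2 hppos
            _ = p^(j+1) * ((E:ℝ)^(j+1)*((E:ℝ)+1)) := rfl
        calc ((1/Real.pi) * (p/(E:ℝ))^(j+1)) * (((E:ℝ)+1-p)/((E:ℝ)+1))
            = (1/Real.pi) * ((p/(E:ℝ))^(j+1) * (((E:ℝ)+1-p)/((E:ℝ)+1))) := by ring
          _ ≤ (1/Real.pi) * (p/((E:ℝ)+1))^(j+1) :=
              mul_le_mul_of_nonneg_left hcross (by positivity)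
      calc _ ≤ _ := step2
        _ ≤ (1/Real.pi) * (p/((E:ℝ)+1))^(j+1) := step3
        _ = (1/Real.pi) * (p/(((E+1:ℕ)):ℝ))^(j+1) := by push_cast; ring

/-- **Bound on generalized binomial coefficients**. -/
theorem gchoose_bound
    (D : ℕ) (p : ℝ) (hp1 : 1 < p) (hpD : p < (D : ℝ)) (hpn : ¬ ∃ n : ℕ, p = (n : ℝ)) :
    |gchoose p (D + 1)| ≤ |gchoose (p - 1) D| ∧
      |gchoose (p - 1) D| ≤ (1 / Real.pi) * (p / (D : ℝ)) ^ (⌊p⌋₊) := by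
  have hπ : (0:ℝ) < Real.pi := Real.pi_pos
  have hp0 : (0:ℝ) < p := by linarith
  set k := ⌊p⌋₊ with hkdef
  have hk1 : 1 ≤ k := Nat.le_floor (by exact_mod_cast hp1.le)
  have hkp : (k:ℝ) ≤ p := Nat.floor_le hp0.le
  have hkp' : (k:ℝ) < p := lt_of_le_of_ne hkp fun h => hpn ⟨k, h.symm⟩
  have hpk1 : p < (k:ℝ)+1 := by exact_mod_cast Nat.lt_floor_add_one p
  have hkD : k + 1 ≤ D := by
    have h1 : (k:ℝ) < (D:ℝ) := lt_trans hkp' hpD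
    exact_mod_cast Nat.cast_lt.mp h1
  have absF : ∀ (s : ℝ) (m : ℕ),
      |gchoose s m| = (∏ i ∈ Finset.range m, |s - (i:ℝ)|) / (m.factorial : ℝ) := by
    intro s m
    rw [gchoose, abs_div, Finset.abs_prod, Nat.abs_cast]
  have hprod : ∏ i ∈ Finset.range D, (p - ((i:ℝ)+1)) = ∏ i ∈ Finset.range D, (p - 1 - (i:ℝ)) :=
    Finset.prod_congr rfl fun i _ => by ring
  have hfD : (D.factorial : ℝ) ≠ 0 := by positivity
  have hD1 : ((D:ℝ)+1) ≠ 0 := by positivity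
  have hrel : gchoose p (D+1) = gchoose (p-1) D * (p/((D:ℝ)+1)) := by
    rw [gchoose, gchoose, Finset.prod_range_succ', Nat.factorial_succ]
    push_cast
    rw [hprod]
    rw [sub_zero, mul_comm ((D:ℝ)+1) (D.factorial:ℝ), mul_div_mul_comm]
  have h1 : |gchoose p (D+1)| ≤ |gchoose (p-1) D| := by
    rw [hrel, abs_mul]
    have habs : |p/((D:ℝ)+1)| ≤ 1 := by
      rw [abs_of_pos (div_pos hp0 (by positivity))]
      rw [div_le_one (by positivity)]
      linarith
    calc |gchoose (p-1) D| * |p/((D:ℝ)+1)| ≤ |gchoose (p-1) D| * 1 :=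
        mul_le_mul_of_nonneg_left habs (abs_nonneg _)
      _ = |gchoose (p-1) D| := mul_one _
  refine ⟨h1, ?_⟩
  rw [absF]
  exact key_lemma p k hk1 hkp' hpk1 D hkD


end
end
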